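/- arXiv:2404.07007 — 2 statements merged into one kernel-verified Lean document; each statement's English description precedes it below -/
import Mathlib

section
/- Assume 0 < m_0 ≤ M_0 for a fixed vector v ∈ ℝ^d, suppose there exists L ∈ {k+1,…,N} with ⟨x_L(0), v⟩ = m_0, and set δ⁻₁ := (1 − e^{−Λσ}) (1/(2(N−1))) (Γ/Λ) (1 − m_0/M_0). Then for all t ∈ [2τ, 6τ] and every leader i ∈ {1,…,k}: ⟨x_i(t), v⟩ ≤ M_0 ( 1 − (1/(N+h−1)) (Γ/Λ) δ⁻₁ e^{−6τΛ} (1 − e^{−Λτ}) ). -/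
open Real Set Filter Topology
open scoped BigOperators RealInnerProductSpace

noncomputable section

/-- `Λ` : the maximum of the sup-norms of the four (positive) influence functions. -/
def Lam {d : ℕ} (ψ ψs φ φs : EuclideanSpace ℝ (Fin d) → EuclideanSpace ℝ (Fin d) → ℝ) : ℝ :=
  max
    (max (⨆ p : EuclideanSpace ℝ (Fin d) × EuclideanSpace ℝ (Fin d), ψ p.1 p.2)
         (⨆ p : EuclideanSpace ℝ (Fin d) × EuclideanSpace ℝ (Fin d), ψs p.1 p.2))
    (max (⨆ p : EuclideanSpace ℝ (Fin d) × EuclideanSpace ℝ (Fin d), φ p.1 p.2)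
         (⨆ p : EuclideanSpace ℝ (Fin d) × EuclideanSpace ℝ (Fin d), φs p.1 p.2))

/-- An influence function is admissible when it is continuous, positive and bounded. -/
def Admissible {d : ℕ} (f : EuclideanSpace ℝ (Fin d) → EuclideanSpace ℝ (Fin d) → ℝ) : Prop :=
  Continuous (fun p : EuclideanSpace ℝ (Fin d) × EuclideanSpace ℝ (Fin d) => f p.1 p.2) ∧
    (∀ z₁ z₂, 0 < f z₁ z₂) ∧
    BddAbove (Set.range fun p : EuclideanSpace ℝ (Fin d) × EuclideanSpace ℝ (Fin d) => f p.1 p.2)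

/-- `(x, y)` is a global classical solution of the two-population delayed
Hegselmann–Krause system, with `k` (resp. `h`) leaders in the first (resp. second)
population and time delay `τ`. -/
structure IsSol {d N M : ℕ} (h k : ℕ) (τ : ℝ)
    (ψ ψs φ φs : EuclideanSpace ℝ (Fin d) → EuclideanSpace ℝ (Fin d) → ℝ)
    (x : Fin N → ℝ → EuclideanSpace ℝ (Fin d))
    (y : Fin M → ℝ → EuclideanSpace ℝ (Fin d)) : Prop where
  contx : ∀ i, Continuous (x i)
  conty : ∀ j, Continuous (y j)
  odex_lead : ∀ i : Fin N, (i : ℕ) < k → ∀ t : ℝ, 0 < t →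
    HasDerivAt (x i)
      ((∑ j ∈ Finset.univ.erase i,
          (ψ (x i t) (x j t) / ((N : ℝ) + h - 1)) • (x j t - x i t)) +
        ∑ j ∈ Finset.univ.filter (fun j : Fin M => (j : ℕ) < h),
          (φ (x i t) (y j (t - τ)) / ((N : ℝ) + h - 1)) • (y j (t - τ) - x i t)) t
  odex_foll : ∀ i : Fin N, k ≤ (i : ℕ) → ∀ t : ℝ, 0 < t →
    HasDerivAt (x i)
      (∑ j ∈ Finset.univ.erase i,
          (ψ (x i t) (x j t) / ((N : ℝ) - 1)) • (x j t - x i t)) t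
  odey_lead : ∀ i : Fin M, (i : ℕ) < h → ∀ t : ℝ, 0 < t →
    HasDerivAt (y i)
      ((∑ j ∈ Finset.univ.erase i,
          (ψs (y i t) (y j t) / ((M : ℝ) + k - 1)) • (y j t - y i t)) +
        ∑ j ∈ Finset.univ.filter (fun j : Fin N => (j : ℕ) < k),
          (φs (y i t) (x j (t - τ)) / ((M : ℝ) + k - 1)) • (x j (t - τ) - y i t)) t
  odey_foll : ∀ i : Fin M, h ≤ (i : ℕ) → ∀ t : ℝ, 0 < t →
    HasDerivAt (y i)
      (∑ j ∈ Finset.univ.erase i,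
          (ψs (y i t) (y j t) / ((M : ℝ) - 1)) • (y j t - y i t)) t

/-- `m_0` : the minimum of the projections on `v` of the initial data. -/
def mInit {d N M : ℕ} (h k : ℕ) (τ : ℝ) (v : EuclideanSpace ℝ (Fin d))
    (x : Fin N → ℝ → EuclideanSpace ℝ (Fin d))
    (y : Fin M → ℝ → EuclideanSpace ℝ (Fin d)) : ℝ :=
  min
    (min (⨅ p : {i : Fin N // (i : ℕ) < k} × (Icc (-τ) (0 : ℝ)), ⟪x p.1.1 (p.2 : ℝ), v⟫)
         (⨅ i : {i : Fin N // k ≤ (i : ℕ)}, ⟪x i.1 0, v⟫))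
    (min (⨅ p : {j : Fin M // (j : ℕ) < h} × (Icc (-τ) (0 : ℝ)), ⟪y p.1.1 (p.2 : ℝ), v⟫)
         (⨅ j : {j : Fin M // h ≤ (j : ℕ)}, ⟪y j.1 0, v⟫))

/-- `M_0` : the maximum of the projections on `v` of the initial data. -/
def MInit {d N M : ℕ} (h k : ℕ) (τ : ℝ) (v : EuclideanSpace ℝ (Fin d))
    (x : Fin N → ℝ → EuclideanSpace ℝ (Fin d))
    (y : Fin M → ℝ → EuclideanSpace ℝ (Fin d)) : ℝ :=
  max
    (max (⨆ p : {i : Fin N // (i : ℕ) < k} × (Icc (-τ) (0 : ℝ)), ⟪x p.1.1 (p.2 : ℝ), v⟫)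
         (⨆ i : {i : Fin N // k ≤ (i : ℕ)}, ⟪x i.1 0, v⟫))
    (max (⨆ p : {j : Fin M // (j : ℕ) < h} × (Icc (-τ) (0 : ℝ)), ⟪y p.1.1 (p.2 : ℝ), v⟫)
         (⨆ j : {j : Fin M // h ≤ (j : ℕ)}, ⟪y j.1 0, v⟫))

/-- `C_0` : the maximum of the norms of the initial data. -/
def Cinit {d N M : ℕ} (h k : ℕ) (τ : ℝ)
    (x : Fin N → ℝ → EuclideanSpace ℝ (Fin d))
    (y : Fin M → ℝ → EuclideanSpace ℝ (Fin d)) : ℝ :=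
  max
    (max (⨆ p : {i : Fin N // (i : ℕ) < k} × (Icc (-τ) (0 : ℝ)), ‖x p.1.1 (p.2 : ℝ)‖)
         (⨆ i : {i : Fin N // k ≤ (i : ℕ)}, ‖x i.1 0‖))
    (max (⨆ p : {j : Fin M // (j : ℕ) < h} × (Icc (-τ) (0 : ℝ)), ‖y p.1.1 (p.2 : ℝ)‖)
         (⨆ j : {j : Fin M // h ≤ (j : ℕ)}, ‖y j.1 0‖))

/-- the minimum of an influence function on the ball of radius `C` (in each variable). -/
def minOnBall {d : ℕ} (C : ℝ)
    (f : EuclideanSpace ℝ (Fin d) → EuclideanSpace ℝ (Fin d) → ℝ) : ℝ :=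
  ⨅ p : {z : EuclideanSpace ℝ (Fin d) × EuclideanSpace ℝ (Fin d) // ‖z.1‖ ≤ C ∧ ‖z.2‖ ≤ C},
    f p.1.1 p.1.2

/-- `Γ := min {ψ₀, ψ*₀, φ₀, φ*₀}`. -/
def Gam {d N M : ℕ} (h k : ℕ) (τ : ℝ)
    (ψ ψs φ φs : EuclideanSpace ℝ (Fin d) → EuclideanSpace ℝ (Fin d) → ℝ)
    (x : Fin N → ℝ → EuclideanSpace ℝ (Fin d))
    (y : Fin M → ℝ → EuclideanSpace ℝ (Fin d)) : ℝ :=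
  min (min (minOnBall (Cinit h k τ x y) ψ) (minOnBall (Cinit h k τ x y) ψs))
      (min (minOnBall (Cinit h k τ x y) φ) (minOnBall (Cinit h k τ x y) φs))

/-- `m_n` : minimum of the projections on `v` over the time mesh `I_n = [(6n-1)τ, 6nτ]`. -/
def mSeq {d N M : ℕ} (h k : ℕ) (τ : ℝ) (v : EuclideanSpace ℝ (Fin d))
    (x : Fin N → ℝ → EuclideanSpace ℝ (Fin d))
    (y : Fin M → ℝ → EuclideanSpace ℝ (Fin d)) (n : ℕ) : ℝ :=
  min
    (min (⨅ p : {i : Fin N // (i : ℕ) < k} × (Icc ((6 * (n : ℝ) - 1) * τ) (6 * (n : ℝ) * τ)),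
            ⟪x p.1.1 (p.2 : ℝ), v⟫)
         (⨅ i : {i : Fin N // k ≤ (i : ℕ)}, ⟪x i.1 (6 * (n : ℝ) * τ), v⟫))
    (min (⨅ p : {j : Fin M // (j : ℕ) < h} × (Icc ((6 * (n : ℝ) - 1) * τ) (6 * (n : ℝ) * τ)),
            ⟪y p.1.1 (p.2 : ℝ), v⟫)
         (⨅ j : {j : Fin M // h ≤ (j : ℕ)}, ⟪y j.1 (6 * (n : ℝ) * τ), v⟫))

/-- `M_n` : maximum of the projections on `v` over the time mesh `I_n = [(6n-1)τ, 6nτ]`. -/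
def MSeq {d N M : ℕ} (h k : ℕ) (τ : ℝ) (v : EuclideanSpace ℝ (Fin d))
    (x : Fin N → ℝ → EuclideanSpace ℝ (Fin d))
    (y : Fin M → ℝ → EuclideanSpace ℝ (Fin d)) (n : ℕ) : ℝ :=
  max
    (max (⨆ p : {i : Fin N // (i : ℕ) < k} × (Icc ((6 * (n : ℝ) - 1) * τ) (6 * (n : ℝ) * τ)),
            ⟪x p.1.1 (p.2 : ℝ), v⟫)
         (⨆ i : {i : Fin N // k ≤ (i : ℕ)}, ⟪x i.1 (6 * (n : ℝ) * τ), v⟫))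
    (max (⨆ p : {j : Fin M // (j : ℕ) < h} × (Icc ((6 * (n : ℝ) - 1) * τ) (6 * (n : ℝ) * τ)),
            ⟪y p.1.1 (p.2 : ℝ), v⟫)
         (⨆ j : {j : Fin M // h ≤ (j : ℕ)}, ⟪y j.1 (6 * (n : ℝ) * τ), v⟫))


/-!
Every agent's velocity, projected on a direction `w`, is a combination of pulls
`⟪·, w⟫ - ⟪x_i, w⟫` with total weight at most `Λ`. Hence no projection can cross a level `A`
above all initial data (at the first crossing, Grönwall for `u' ≤ Λ (A - u)` keeps the crossing
agent below `A`), so `⟪·, v⟫ ≤ M₀` and, taking `w = x_i(t)`, `‖x_i(t)‖ ≤ C₀` for all `t ≥ 0`;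
the latter makes `Γ` a lower bound for all interaction weights. The follower `L` starts at `m₀`
and rises at rate at most `Λ`, so `M₀ - ⟪x_L(t), v⟫ ≥ e^{-Λt} (M₀ - m₀)`. A leader `i` feels
that gap through the weight `ψ(x_i, x_L)/(N+h-1) ≥ Γ/(N+h-1)`, so `z = M₀ - ⟪x_i, v⟫` satisfies
`z' ≥ -Λ z + Γ/(N+h-1) (M₀ - m₀) e^{-Λt}`, whence `z(t) ≥ Γ/(N+h-1) (M₀ - m₀) t e^{-Λt}`. On
`[2τ, 6τ]` this dominates the claimed decrement because `M₀ δ₁ ≤ (M₀ - m₀)/2` and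
`1 - e^{-Λτ} ≤ Λτ`.
-/

theorem exp_neg_mul_le_of_le_exp_mul {a b c : ℝ} (h : a ≤ exp b * c) : exp (-b) * a ≤ c := by
  rwa [exp_neg, inv_mul_le_iff₀ (exp_pos b)]

theorem exp_mul_sub_add_mul_le_of_deriv_le {u : ℝ → ℝ} {lam A c T : ℝ} (hT : 0 ≤ T)
    (hu : ContinuousOn u (Icc 0 T)) (hdiff : ∀ t ∈ Ioo 0 T, DifferentiableAt ℝ u t)
    (hderiv : ∀ t ∈ Ioo 0 T, deriv u t ≤ lam * (A - u t) - c * exp (-(lam * t))) :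
    exp (lam * T) * (u T - A) + c * T ≤ u 0 - A := by
  have hanti : AntitoneOn (fun t => exp (lam * t) * (u t - A) + c * t) (Icc 0 T) := by
    refine antitoneOn_of_hasDerivWithinAt_nonpos (convex_Icc 0 T)
      (f' := fun t => lam * exp (lam * t) * (u t - A) + exp (lam * t) * deriv u t + c)
      (by fun_prop) (fun t ht => ?_) (fun t ht => ?_) <;> rw [interior_Icc] at ht
    · have hexp : HasDerivAt (fun s => exp (lam * s)) (lam * exp (lam * t)) t := by
        simpa [mul_comm] using ((hasDerivAt_id t).const_mul lam).exp
      exact (((hexp.mul ((hdiff t ht).hasDerivAt.sub_const A)).add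
        ((hasDerivAt_id t).const_mul c)).congr_deriv (by simp)).hasDerivWithinAt
    · have hcancel : exp (lam * t) * exp (-(lam * t)) = 1 := by rw [← exp_add]; simp
      have := mul_le_mul_of_nonneg_left (hderiv t ht) (exp_pos (lam * t)).le
      linear_combination this - c * hcancel
  simpa using hanti (left_mem_Icc.2 hT) (right_mem_Icc.2 hT) hT

theorem le_of_deriv_le_of_barrier {ι : Type*} [Finite ι] {u : ι → ℝ → ℝ} {Λ B : ℝ}
    (hu : ∀ a, Continuous (u a)) (hdiff : ∀ a, ∀ t > 0, DifferentiableAt ℝ (u a) t)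
    (h0 : ∀ a, u a 0 ≤ B)
    (hbarrier : ∀ A > B, ∀ t > 0, (∀ a, ∀ s ∈ Icc 0 t, u a s ≤ A) →
      ∀ a, deriv (u a) t ≤ Λ * (A - u a t))
    {t : ℝ} (ht : 0 ≤ t) (a : ι) : u a t ≤ B := by
  refine le_of_forall_gt_imp_ge_of_dense fun A hA => ?_
  by_contra! hlt
  have hS : IsCompact (Icc 0 t ∩ ⋃ b, {s | A ≤ u b s}) := isCompact_Icc.inter_right
    (isClosed_iUnion_of_finite fun b => isClosed_le continuous_const (hu b))
  obtain ⟨t', ⟨ht', hexit⟩, hfirst⟩ :=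
    hS.exists_isLeast ⟨t, right_mem_Icc.2 ht, mem_iUnion.2 ⟨a, hlt.le⟩⟩
  have hbefore : ∀ s ∈ Ico 0 t', ∀ b, u b s < A := fun s hs b => by
    by_contra! hle
    exact (hfirst ⟨⟨hs.1, hs.2.le.trans ht'.2⟩, mem_iUnion.2 ⟨b, hle⟩⟩).not_gt hs.2
  obtain ⟨b, hb⟩ := mem_iUnion.1 hexit
  have hgronwall := exp_mul_sub_add_mul_le_of_deriv_le (c := 0) ht'.1 (hu b).continuousOn
    (fun s hs => hdiff b s hs.1) fun s hs => by
      simpa using hbarrier A hA s hs.1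
        (fun c r hr => (hbefore r ⟨hr.1, hr.2.trans_lt hs.2⟩ c).le) b
  have := mul_nonneg (exp_pos (Λ * t')).le (sub_nonneg.2 hb)
  linarith [h0 b]

theorem delayed_le_of_history {g : ℝ → ℝ} {τ t A : ℝ} (hτ : 0 ≤ τ) (ht : 0 ≤ t)
    (hinit : ∀ s ∈ Icc (-τ) 0, g s ≤ A) (hhist : ∀ s ∈ Icc 0 t, g s ≤ A) : g (t - τ) ≤ A := by
  rcases le_total 0 (t - τ) with h | h
  · exact hhist _ ⟨h, by linarith⟩
  · exact hinit _ ⟨by linarith, h⟩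

theorem mul_div_le_of_le {n D Λ : ℝ} (hnD : n ≤ D) (hn : 0 ≤ n) (hΛ : 0 ≤ Λ) :
    n * (Λ / D) ≤ Λ := by
  rw [mul_div_left_comm]
  exact mul_le_of_le_one_right hΛ (div_le_one_of_le₀ hnD (hn.trans hnD))

theorem div_mem_Icc_div {a Λ D : ℝ} (ha : a ∈ Icc 0 Λ) (hD : 0 ≤ D) : a / D ∈ Icc 0 (Λ / D) :=
  ⟨div_nonneg ha.1 hD, div_le_div_of_nonneg_right ha.2 hD⟩

theorem sub_one_nonneg_of_fin {N : ℕ} (i : Fin N) : (0 : ℝ) ≤ N - 1 := by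
  have : (1 : ℝ) ≤ N := by exact_mod_cast i.pos
  linarith

theorem add_sub_one_nonneg_of_fin {N : ℕ} (i : Fin N) (h : ℕ) : (0 : ℝ) ≤ N + h - 1 := by
  linarith [sub_one_nonneg_of_fin i, (h.cast_nonneg : (0 : ℝ) ≤ h)]

theorem card_univ_erase_fin {N : ℕ} (i : Fin N) :
    ((Finset.univ.erase i).card : ℝ) = N - 1 := by
  rw [Finset.card_erase_of_mem (Finset.mem_univ i), Finset.card_univ, Fintype.card_fin,
    Nat.cast_pred i.pos]

theorem inner_sum_smul_sub_le {E ι : Type*} [NormedAddCommGroup E] [InnerProductSpace ℝ E]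
    (s : Finset ι) (g : ι → ℝ) (p : ι → E) {q w : E} {A c : ℝ}
    (hg : ∀ j ∈ s, g j ∈ Icc 0 c) (hq : ⟪q, w⟫ ≤ A) :
    ⟪∑ j ∈ s, g j • (p j - q), w⟫ ≤
      (s.card : ℝ) * c * (A - ⟪q, w⟫) - ∑ j ∈ s, g j * (A - ⟪p j, w⟫) := by
  have hterm : ∀ j ∈ s, ⟪g j • (p j - q), w⟫ ≤ c * (A - ⟪q, w⟫) - g j * (A - ⟪p j, w⟫) :=
    fun j hj => by
      rw [real_inner_smul_left, inner_sub_left]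
      nlinarith [(hg j hj).2, sub_nonneg.2 hq]
  calc ⟪∑ j ∈ s, g j • (p j - q), w⟫ = ∑ j ∈ s, ⟪g j • (p j - q), w⟫ := sum_inner _ _ _
    _ ≤ ∑ j ∈ s, (c * (A - ⟪q, w⟫) - g j * (A - ⟪p j, w⟫)) := Finset.sum_le_sum hterm
    _ = (s.card : ℝ) * c * (A - ⟪q, w⟫) - ∑ j ∈ s, g j * (A - ⟪p j, w⟫) := by
      rw [Finset.sum_sub_distrib, Finset.sum_const, nsmul_eq_mul, mul_assoc]

theorem deriv_inner_eq_of_hasDerivAt {d : ℕ} {f : ℝ → EuclideanSpace ℝ (Fin d)}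
    {f' : EuclideanSpace ℝ (Fin d)} {t : ℝ} (hf : HasDerivAt f f' t)
    (w : EuclideanSpace ℝ (Fin d)) : deriv (fun s => ⟪f s, w⟫) t = ⟪f', w⟫ := by
  simpa using (hf.inner ℝ (hasDerivAt_const t w)).deriv

theorem le_iSup_prod_Icc_of_continuous {d n m : ℕ} {τ : ℝ} {f : EuclideanSpace ℝ (Fin d) → ℝ}
    {z : Fin n → ℝ → EuclideanSpace ℝ (Fin d)} (hf : Continuous f) (hz : ∀ i, Continuous (z i))
    {i : Fin n} (hi : (i : ℕ) < m) {s : ℝ} (hs : s ∈ Icc (-τ) 0) :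
    f (z i s) ≤ ⨆ p : {i : Fin n // (i : ℕ) < m} × (Icc (-τ) (0 : ℝ)), f (z p.1.1 (p.2 : ℝ)) := by
  have hcont : Continuous fun p : {i : Fin n // (i : ℕ) < m} × (Icc (-τ) (0 : ℝ)) =>
      f (z p.1.1 (p.2 : ℝ)) :=
    continuous_prod_of_discrete_left.2 fun p => hf.comp ((hz p.1).comp continuous_subtype_val)
  exact le_ciSup (isCompact_range hcont).bddAbove (⟨⟨i, hi⟩, ⟨s, hs⟩⟩ : _ × _)

section Constants

variable {d : ℕ} {ψ ψs φ φs f : EuclideanSpace ℝ (Fin d) → EuclideanSpace ℝ (Fin d) → ℝ}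

theorem Admissible.le_iSup (hf : Admissible f) (z₁ z₂ : EuclideanSpace ℝ (Fin d)) :
    f z₁ z₂ ≤ ⨆ p : EuclideanSpace ℝ (Fin d) × EuclideanSpace ℝ (Fin d), f p.1 p.2 :=
  le_ciSup hf.2.2 (z₁, z₂)

theorem mem_Icc_Lam (hψ : Admissible ψ) (hψs : Admissible ψs) (hφ : Admissible φ)
    (hφs : Admissible φs) :
    (∀ z₁ z₂, ψ z₁ z₂ ∈ Icc 0 (Lam ψ ψs φ φs)) ∧ (∀ z₁ z₂, ψs z₁ z₂ ∈ Icc 0 (Lam ψ ψs φ φs)) ∧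
      (∀ z₁ z₂, φ z₁ z₂ ∈ Icc 0 (Lam ψ ψs φ φs)) ∧ ∀ z₁ z₂, φs z₁ z₂ ∈ Icc 0 (Lam ψ ψs φ φs) :=
  ⟨fun z₁ z₂ => ⟨(hψ.2.1 z₁ z₂).le, le_max_of_le_left (le_max_of_le_left (hψ.le_iSup z₁ z₂))⟩,
    fun z₁ z₂ => ⟨(hψs.2.1 z₁ z₂).le, le_max_of_le_left (le_max_of_le_right (hψs.le_iSup z₁ z₂))⟩,
    fun z₁ z₂ => ⟨(hφ.2.1 z₁ z₂).le, le_max_of_le_right (le_max_of_le_left (hφ.le_iSup z₁ z₂))⟩,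
    fun z₁ z₂ => ⟨(hφs.2.1 z₁ z₂).le,
      le_max_of_le_right (le_max_of_le_right (hφs.le_iSup z₁ z₂))⟩⟩

theorem minOnBall_nonneg (C : ℝ) (hf : ∀ z₁ z₂, 0 < f z₁ z₂) : 0 ≤ minOnBall C f :=
  Real.iInf_nonneg fun _ => (hf _ _).le

theorem minOnBall_le {C : ℝ} (hf : ∀ z₁ z₂, 0 < f z₁ z₂) {z₁ z₂ : EuclideanSpace ℝ (Fin d)}
    (h₁ : ‖z₁‖ ≤ C) (h₂ : ‖z₂‖ ≤ C) : minOnBall C f ≤ f z₁ z₂ :=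
  ciInf_le ⟨0, by rintro _ ⟨p, rfl⟩; exact (hf _ _).le⟩
    (⟨(z₁, z₂), h₁, h₂⟩ : {z : _ × _ // ‖z.1‖ ≤ C ∧ ‖z.2‖ ≤ C})

variable {N M h k : ℕ} {τ : ℝ}
  {x : Fin N → ℝ → EuclideanSpace ℝ (Fin d)} {y : Fin M → ℝ → EuclideanSpace ℝ (Fin d)}

theorem Gam_nonneg (hψ : Admissible ψ) (hψs : Admissible ψs) (hφ : Admissible φ)
    (hφs : Admissible φs) : 0 ≤ Gam h k τ ψ ψs φ φs x y :=
  le_min (le_min (minOnBall_nonneg _ hψ.2.1) (minOnBall_nonneg _ hψs.2.1))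
    (le_min (minOnBall_nonneg _ hφ.2.1) (minOnBall_nonneg _ hφs.2.1))

theorem Gam_le (hψ : Admissible ψ) {z₁ z₂ : EuclideanSpace ℝ (Fin d)}
    (h₁ : ‖z₁‖ ≤ Cinit h k τ x y) (h₂ : ‖z₂‖ ≤ Cinit h k τ x y) :
    Gam h k τ ψ ψs φ φs x y ≤ ψ z₁ z₂ :=
  (min_le_left _ _).trans ((min_le_left _ _).trans (minOnBall_le hψ.2.1 h₁ h₂))

end Constants

structure InitialBound {d N M : ℕ} (h k : ℕ) (τ : ℝ) (f : EuclideanSpace ℝ (Fin d) → ℝ)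
    (x : Fin N → ℝ → EuclideanSpace ℝ (Fin d)) (y : Fin M → ℝ → EuclideanSpace ℝ (Fin d))
    (B : ℝ) : Prop where
  x_lead : ∀ i : Fin N, (i : ℕ) < k → ∀ s ∈ Icc (-τ) 0, f (x i s) ≤ B
  x_foll : ∀ i : Fin N, k ≤ (i : ℕ) → f (x i 0) ≤ B
  y_lead : ∀ j : Fin M, (j : ℕ) < h → ∀ s ∈ Icc (-τ) 0, f (y j s) ≤ B
  y_foll : ∀ j : Fin M, h ≤ (j : ℕ) → f (y j 0) ≤ B

namespace InitialBound

variable {d N M h k : ℕ} {τ B : ℝ} {f : EuclideanSpace ℝ (Fin d) → ℝ}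
  {x : Fin N → ℝ → EuclideanSpace ℝ (Fin d)} {y : Fin M → ℝ → EuclideanSpace ℝ (Fin d)}

theorem swap (hB : InitialBound h k τ f x y B) : InitialBound k h τ f y x B :=
  ⟨hB.y_lead, hB.y_foll, hB.x_lead, hB.x_foll⟩

theorem x_zero (hB : InitialBound h k τ f x y B) (hτ : 0 ≤ τ) (i : Fin N) : f (x i 0) ≤ B := by
  rcases lt_or_ge (i : ℕ) k with hi | hi
  exacts [hB.x_lead i hi 0 ⟨by linarith, le_rfl⟩, hB.x_foll i hi]

theorem mono {g : EuclideanSpace ℝ (Fin d) → ℝ} {B' : ℝ} (hB : InitialBound h k τ f x y B)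
    (hfg : ∀ z, f z ≤ B → g z ≤ B') : InitialBound h k τ g x y B' :=
  ⟨fun i hi s hs => hfg _ (hB.x_lead i hi s hs), fun i hi => hfg _ (hB.x_foll i hi),
    fun j hj s hs => hfg _ (hB.y_lead j hj s hs), fun j hj => hfg _ (hB.y_foll j hj)⟩

theorem of_iSup (hf : Continuous f) (hx : ∀ i, Continuous (x i)) (hy : ∀ j, Continuous (y j)) :
    InitialBound h k τ f x y
      (max (max (⨆ p : {i : Fin N // (i : ℕ) < k} × (Icc (-τ) (0 : ℝ)), f (x p.1.1 (p.2 : ℝ)))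
          (⨆ i : {i : Fin N // k ≤ (i : ℕ)}, f (x i.1 0)))
        (max (⨆ p : {j : Fin M // (j : ℕ) < h} × (Icc (-τ) (0 : ℝ)), f (y p.1.1 (p.2 : ℝ)))
          (⨆ j : {j : Fin M // h ≤ (j : ℕ)}, f (y j.1 0)))) :=
  ⟨fun _ hi _ hs =>
      le_max_of_le_left (le_max_of_le_left (le_iSup_prod_Icc_of_continuous hf hx hi hs)),
    fun i hi => le_max_of_le_left (le_max_of_le_right
      (le_ciSup (f := fun i : {i : Fin N // k ≤ (i : ℕ)} => f (x i.1 0))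
        (Set.finite_range _).bddAbove ⟨i, hi⟩)),
    fun _ hj _ hs =>
      le_max_of_le_right (le_max_of_le_left (le_iSup_prod_Icc_of_continuous hf hy hj hs)),
    fun j hj => le_max_of_le_right (le_max_of_le_right
      (le_ciSup (f := fun j : {j : Fin M // h ≤ (j : ℕ)} => f (y j.1 0))
        (Set.finite_range _).bddAbove ⟨j, hj⟩))⟩

end InitialBound

theorem initialBound_MInit {d N M h k : ℕ} {τ : ℝ} (v : EuclideanSpace ℝ (Fin d))
    {x : Fin N → ℝ → EuclideanSpace ℝ (Fin d)} {y : Fin M → ℝ → EuclideanSpace ℝ (Fin d)}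
    (hx : ∀ i, Continuous (x i)) (hy : ∀ j, Continuous (y j)) :
    InitialBound h k τ (fun z => ⟪z, v⟫) x y (MInit h k τ v x y) :=
  InitialBound.of_iSup (continuous_id.inner continuous_const) hx hy

theorem initialBound_Cinit {d N M h k : ℕ} {τ : ℝ}
    {x : Fin N → ℝ → EuclideanSpace ℝ (Fin d)} {y : Fin M → ℝ → EuclideanSpace ℝ (Fin d)}
    (hx : ∀ i, Continuous (x i)) (hy : ∀ j, Continuous (y j)) :
    InitialBound h k τ (‖·‖) x y (Cinit h k τ x y) :=
  InitialBound.of_iSup continuous_norm hx hy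

namespace IsSol

variable {d N M h k : ℕ} {τ Λ : ℝ}
  {ψ ψs φ φs : EuclideanSpace ℝ (Fin d) → EuclideanSpace ℝ (Fin d) → ℝ}
  {x : Fin N → ℝ → EuclideanSpace ℝ (Fin d)} {y : Fin M → ℝ → EuclideanSpace ℝ (Fin d)}

theorem swap (hsol : IsSol h k τ ψ ψs φ φs x y) : IsSol k h τ ψs ψ φs φ y x :=
  ⟨hsol.conty, hsol.contx, hsol.odey_lead, hsol.odey_foll, hsol.odex_lead, hsol.odex_foll⟩

theorem differentiableAt_inner (hsol : IsSol h k τ ψ ψs φ φs x y) (i : Fin N) {t : ℝ}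
    (ht : 0 < t) (w : EuclideanSpace ℝ (Fin d)) :
    DifferentiableAt ℝ (fun s => ⟪x i s, w⟫) t := by
  rcases lt_or_ge (i : ℕ) k with hi | hi
  · exact (hsol.odex_lead i hi t ht).differentiableAt.inner ℝ (differentiableAt_const w)
  · exact (hsol.odex_foll i hi t ht).differentiableAt.inner ℝ (differentiableAt_const w)

theorem deriv_inner_lead_le (hsol : IsSol h k τ ψ ψs φ φs x y)
    (hψ : ∀ z₁ z₂, ψ z₁ z₂ ∈ Icc 0 Λ) (hφ : ∀ z₁ z₂, φ z₁ z₂ ∈ Icc 0 Λ)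
    {i : Fin N} (hi : (i : ℕ) < k) {t : ℝ} (ht : 0 < t) {w : EuclideanSpace ℝ (Fin d)} {A : ℝ}
    (hxi : ⟪x i t, w⟫ ≤ A) (hy : ∀ j : Fin M, (j : ℕ) < h → ⟪y j (t - τ), w⟫ ≤ A) :
    deriv (fun s => ⟪x i s, w⟫) t ≤ Λ * (A - ⟪x i t, w⟫) -
      ∑ j ∈ Finset.univ.erase i, ψ (x i t) (x j t) / ((N : ℝ) + h - 1) * (A - ⟪x j t, w⟫) := by
  have hD := add_sub_one_nonneg_of_fin i h
  have hxx := inner_sum_smul_sub_le (Finset.univ.erase i)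
    (fun j => ψ (x i t) (x j t) / ((N : ℝ) + h - 1)) (fun j => x j t)
    (fun j _ => div_mem_Icc_div (hψ _ _) hD) hxi
  have hxy := inner_sum_smul_sub_le (Finset.univ.filter fun j : Fin M => (j : ℕ) < h)
    (fun j => φ (x i t) (y j (t - τ)) / ((N : ℝ) + h - 1)) (fun j => y j (t - τ))
    (fun j _ => div_mem_Icc_div (hφ _ _) hD) hxi
  have hdelayed : 0 ≤ ∑ j ∈ Finset.univ.filter (fun j : Fin M => (j : ℕ) < h),
      φ (x i t) (y j (t - τ)) / ((N : ℝ) + h - 1) * (A - ⟪y j (t - τ), w⟫) :=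
    Finset.sum_nonneg fun j hj => mul_nonneg (div_mem_Icc_div (hφ _ _) hD).1
      (sub_nonneg.2 (hy j (Finset.mem_filter.1 hj).2))
  have hcard : ((Finset.univ.filter fun j : Fin M => (j : ℕ) < h).card : ℝ) ≤ h := by
    exact_mod_cast Fin.card_filter_val_lt.trans_le (min_le_right M h)
  have hweights := mul_le_mul_of_nonneg_right
    (mul_div_le_of_le (n := (Finset.univ.erase i).card +
      (Finset.univ.filter fun j : Fin M => (j : ℕ) < h).card) (D := (N : ℝ) + h - 1)
      (by rw [card_univ_erase_fin]; linarith) (by positivity) ((hψ 0 0).1.trans (hψ 0 0).2))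
    (sub_nonneg.2 hxi)
  rw [deriv_inner_eq_of_hasDerivAt (hsol.odex_lead i hi t ht), inner_add_left]
  linarith

theorem deriv_inner_foll_le (hsol : IsSol h k τ ψ ψs φ φs x y)
    (hψ : ∀ z₁ z₂, ψ z₁ z₂ ∈ Icc 0 Λ) {i : Fin N} (hi : k ≤ (i : ℕ)) {t : ℝ} (ht : 0 < t)
    {w : EuclideanSpace ℝ (Fin d)} {A : ℝ} (hx : ∀ j, ⟪x j t, w⟫ ≤ A) :
    deriv (fun s => ⟪x i s, w⟫) t ≤ Λ * (A - ⟪x i t, w⟫) := by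
  have hD := sub_one_nonneg_of_fin i
  have hxx := inner_sum_smul_sub_le (Finset.univ.erase i)
    (fun j => ψ (x i t) (x j t) / ((N : ℝ) - 1)) (fun j => x j t)
    (fun j _ => div_mem_Icc_div (hψ _ _) hD) (hx i)
  have hothers : 0 ≤ ∑ j ∈ Finset.univ.erase i,
      ψ (x i t) (x j t) / ((N : ℝ) - 1) * (A - ⟪x j t, w⟫) :=
    Finset.sum_nonneg fun j _ => mul_nonneg (div_mem_Icc_div (hψ _ _) hD).1 (sub_nonneg.2 (hx j))
  have hweights := mul_le_mul_of_nonneg_right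
    (mul_div_le_of_le (card_univ_erase_fin i).le (by positivity) ((hψ 0 0).1.trans (hψ 0 0).2))
    (sub_nonneg.2 (hx i))
  rw [deriv_inner_eq_of_hasDerivAt (hsol.odex_foll i hi t ht)]
  linarith

theorem deriv_inner_le (hsol : IsSol h k τ ψ ψs φ φs x y)
    (hψ : ∀ z₁ z₂, ψ z₁ z₂ ∈ Icc 0 Λ) (hφ : ∀ z₁ z₂, φ z₁ z₂ ∈ Icc 0 Λ)
    (i : Fin N) {t : ℝ} (ht : 0 < t) {w : EuclideanSpace ℝ (Fin d)} {A : ℝ}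
    (hx : ∀ j, ⟪x j t, w⟫ ≤ A) (hy : ∀ j : Fin M, (j : ℕ) < h → ⟪y j (t - τ), w⟫ ≤ A) :
    deriv (fun s => ⟪x i s, w⟫) t ≤ Λ * (A - ⟪x i t, w⟫) := by
  rcases lt_or_ge (i : ℕ) k with hi | hi
  · have hothers : 0 ≤ ∑ j ∈ Finset.univ.erase i,
        ψ (x i t) (x j t) / ((N : ℝ) + h - 1) * (A - ⟪x j t, w⟫) :=
      Finset.sum_nonneg fun j _ => mul_nonneg
        (div_nonneg (hψ _ _).1 (add_sub_one_nonneg_of_fin i h)) (sub_nonneg.2 (hx j))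
    linarith [hsol.deriv_inner_lead_le hψ hφ hi ht (hx i) hy]
  · exact hsol.deriv_inner_foll_le hψ hi ht hx

theorem inner_le_of_initialBound (hsol : IsSol h k τ ψ ψs φ φs x y)
    (hψ : ∀ z₁ z₂, ψ z₁ z₂ ∈ Icc 0 Λ) (hψs : ∀ z₁ z₂, ψs z₁ z₂ ∈ Icc 0 Λ)
    (hφ : ∀ z₁ z₂, φ z₁ z₂ ∈ Icc 0 Λ) (hφs : ∀ z₁ z₂, φs z₁ z₂ ∈ Icc 0 Λ) (hτ : 0 ≤ τ)
    {w : EuclideanSpace ℝ (Fin d)} {B : ℝ} (hinit : InitialBound h k τ (fun z => ⟪z, w⟫) x y B)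
    {t : ℝ} (ht : 0 ≤ t) : (∀ i, ⟪x i t, w⟫ ≤ B) ∧ ∀ j, ⟪y j t, w⟫ ≤ B := by
  let u : Fin N ⊕ Fin M → ℝ → ℝ := Sum.elim (fun i s => ⟪x i s, w⟫) (fun j s => ⟪y j s, w⟫)
  have hu : ∀ a, u a t ≤ B := by
    refine le_of_deriv_le_of_barrier (Λ := Λ) ?_ ?_ ?_ ?_ ht
    · rintro (i | j)
      exacts [(hsol.contx i).inner continuous_const, (hsol.conty j).inner continuous_const]
    · rintro (i | j) s hs
      exacts [hsol.differentiableAt_inner i hs w, hsol.swap.differentiableAt_inner j hs w]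
    · rintro (i | j)
      exacts [hinit.x_zero hτ i, hinit.swap.x_zero hτ j]
    · intro A hA s hs hhist
      have hxA : ∀ r ∈ Icc 0 s, ∀ i, ⟪x i r, w⟫ ≤ A := fun r hr i => hhist (.inl i) r hr
      have hyA : ∀ r ∈ Icc 0 s, ∀ j, ⟪y j r, w⟫ ≤ A := fun r hr j => hhist (.inr j) r hr
      rintro (i | j)
      · exact hsol.deriv_inner_le hψ hφ i hs (hxA s ⟨hs.le, le_rfl⟩) fun j hj =>
          delayed_le_of_history hτ hs.le (fun r hr => (hinit.y_lead j hj r hr).trans hA.le)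
            fun r hr => hyA r hr j
      · exact hsol.swap.deriv_inner_le hψs hφs j hs (hyA s ⟨hs.le, le_rfl⟩) fun i hi =>
          delayed_le_of_history hτ hs.le (fun r hr => (hinit.x_lead i hi r hr).trans hA.le)
            fun r hr => hxA r hr i
  exact ⟨fun i => hu (.inl i), fun j => hu (.inr j)⟩

theorem norm_le_of_initialBound (hsol : IsSol h k τ ψ ψs φ φs x y)
    (hψ : ∀ z₁ z₂, ψ z₁ z₂ ∈ Icc 0 Λ) (hψs : ∀ z₁ z₂, ψs z₁ z₂ ∈ Icc 0 Λ)
    (hφ : ∀ z₁ z₂, φ z₁ z₂ ∈ Icc 0 Λ) (hφs : ∀ z₁ z₂, φs z₁ z₂ ∈ Icc 0 Λ) (hτ : 0 ≤ τ)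
    {C : ℝ} (hinit : InitialBound h k τ (‖·‖) x y C) (hC : 0 ≤ C) {t : ℝ} (ht : 0 ≤ t)
    (i : Fin N) : ‖x i t‖ ≤ C := by
  have hinner := (hsol.inner_le_of_initialBound hψ hψs hφ hφs hτ
    (hinit.mono fun z hz => (real_inner_le_norm z (x i t)).trans
      (mul_le_mul_of_nonneg_right hz (norm_nonneg _))) ht).1 i
  rw [real_inner_self_eq_norm_mul_norm] at hinner
  nlinarith [norm_nonneg (x i t)]

theorem exp_mul_le_sub_inner (hsol : IsSol h k τ ψ ψs φ φs x y)
    (hψ : ∀ z₁ z₂, ψ z₁ z₂ ∈ Icc 0 Λ) (hφ : ∀ z₁ z₂, φ z₁ z₂ ∈ Icc 0 Λ)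
    {w : EuclideanSpace ℝ (Fin d)} {A : ℝ} (hx : ∀ t > 0, ∀ j, ⟪x j t, w⟫ ≤ A)
    (hy : ∀ t > 0, ∀ j : Fin M, (j : ℕ) < h → ⟪y j (t - τ), w⟫ ≤ A) (i : Fin N) {T : ℝ}
    (hT : 0 ≤ T) : exp (-(Λ * T)) * (A - ⟪x i 0, w⟫) ≤ A - ⟪x i T, w⟫ := by
  have hgronwall := exp_mul_sub_add_mul_le_of_deriv_le (lam := Λ) (A := A) (c := 0) hT
    ((hsol.contx i).inner continuous_const).continuousOn
    (fun t ht => hsol.differentiableAt_inner i ht.1 w)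
    (fun t ht => by simpa using hsol.deriv_inner_le hψ hφ i ht.1 (hx t ht.1) (hy t ht.1))
  exact exp_neg_mul_le_of_le_exp_mul (by linarith)

theorem exp_mul_le_sub_inner_lead (hsol : IsSol h k τ ψ ψs φ φs x y)
    (hψ : ∀ z₁ z₂, ψ z₁ z₂ ∈ Icc 0 Λ) (hφ : ∀ z₁ z₂, φ z₁ z₂ ∈ Icc 0 Λ)
    {w : EuclideanSpace ℝ (Fin d)} {A γ : ℝ} {i L : Fin N} (hi : (i : ℕ) < k) (hLi : L ≠ i)
    (hx : ∀ t > 0, ∀ j, ⟪x j t, w⟫ ≤ A)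
    (hy : ∀ t > 0, ∀ j : Fin M, (j : ℕ) < h → ⟪y j (t - τ), w⟫ ≤ A)
    (hγ : 0 ≤ γ) (hγψ : ∀ t > 0, γ ≤ ψ (x i t) (x L t)) (hi0 : ⟪x i 0, w⟫ ≤ A) {T : ℝ}
    (hT : 0 ≤ T) :
    exp (-(Λ * T)) * (γ / ((N : ℝ) + h - 1) * (A - ⟪x L 0, w⟫) * T) ≤ A - ⟪x i T, w⟫ := by
  have hD := add_sub_one_nonneg_of_fin i h
  have hpull : ∀ t > 0, γ / ((N : ℝ) + h - 1) * (A - ⟪x L 0, w⟫) * exp (-(Λ * t)) ≤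
      ψ (x i t) (x L t) / ((N : ℝ) + h - 1) * (A - ⟪x L t, w⟫) := fun t ht => by
    rw [mul_assoc, mul_comm (A - _)]
    calc γ / ((N : ℝ) + h - 1) * (exp (-(Λ * t)) * (A - ⟪x L 0, w⟫))
        ≤ γ / ((N : ℝ) + h - 1) * (A - ⟪x L t, w⟫) := by
          gcongr
          exact hsol.exp_mul_le_sub_inner hψ hφ hx hy L ht.le
      _ ≤ ψ (x i t) (x L t) / ((N : ℝ) + h - 1) * (A - ⟪x L t, w⟫) := by
          gcongr
          · linarith [hx t ht L]
          · exact hγψ t ht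
  have hgronwall := exp_mul_sub_add_mul_le_of_deriv_le (lam := Λ) (A := A)
    (c := γ / ((N : ℝ) + h - 1) * (A - ⟪x L 0, w⟫)) hT
    ((hsol.contx i).inner continuous_const).continuousOn
    (fun t ht => hsol.differentiableAt_inner i ht.1 w) fun t ht => by
      have hL : ψ (x i t) (x L t) / ((N : ℝ) + h - 1) * (A - ⟪x L t, w⟫) ≤
          ∑ j ∈ Finset.univ.erase i, ψ (x i t) (x j t) / ((N : ℝ) + h - 1) * (A - ⟪x j t, w⟫) :=
        Finset.single_le_sum (f := fun j => ψ (x i t) (x j t) / ((N : ℝ) + h - 1) *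
            (A - ⟪x j t, w⟫))
          (fun j _ => mul_nonneg (div_nonneg (hψ _ _).1 hD) (sub_nonneg.2 (hx t ht.1 j)))
          (Finset.mem_erase.2 ⟨hLi, Finset.mem_univ L⟩)
      linarith [hsol.deriv_inner_lead_le hψ hφ hi ht.1 (hx t ht.1 i) (hy t ht.1), hpull t ht.1]
  exact exp_neg_mul_le_of_le_exp_mul (by linarith)

end IsSol

theorem mul_delta_le_half_sub {Λ Γ σ N m₀ M₀ : ℝ} (hΛ : 0 < Λ) (hΓ : 0 ≤ Γ) (hΓΛ : Γ ≤ Λ)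
    (hN : 2 ≤ N) (hM₀ : 0 < M₀) (hm₀M₀ : m₀ ≤ M₀) :
    M₀ * ((1 - exp (-(Λ * σ))) * (1 / (2 * (N - 1))) * (Γ / Λ) * (1 - m₀ / M₀)) ≤
      (M₀ - m₀) / 2 := by
  have hexp : 1 - exp (-(Λ * σ)) ≤ 1 := by linarith [exp_pos (-(Λ * σ))]
  have hhalf : 1 / (2 * (N - 1)) ≤ 1 / 2 := one_div_le_one_div_of_le (by norm_num) (by linarith)
  have hratio : Γ / Λ ≤ 1 := (div_le_one hΛ).2 hΓΛ
  have hprod : (1 - exp (-(Λ * σ))) * (1 / (2 * (N - 1))) * (Γ / Λ) ≤ 1 * (1 / 2) * 1 :=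
    mul_le_mul (mul_le_mul hexp hhalf (by rw [one_div_nonneg]; linarith) zero_le_one) hratio
      (div_nonneg hΓ hΛ.le) (by norm_num)
  have hgap : M₀ * (1 - m₀ / M₀) = M₀ - m₀ := by field_simp
  calc M₀ * ((1 - exp (-(Λ * σ))) * (1 / (2 * (N - 1))) * (Γ / Λ) * (1 - m₀ / M₀))
      = (1 - exp (-(Λ * σ))) * (1 / (2 * (N - 1))) * (Γ / Λ) * (M₀ - m₀) := by
        rw [← hgap]; ring
    _ ≤ 1 * (1 / 2) * 1 * (M₀ - m₀) := mul_le_mul_of_nonneg_right hprod (by linarith)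
    _ = (M₀ - m₀) / 2 := by ring

theorem mul_decrement_le {Λ Γ D τ T m₀ M₀ δ : ℝ} (hΛ : 0 < Λ) (hΓ : 0 ≤ Γ) (hD : 0 < D)
    (hτ : 0 < τ) (hT : T ∈ Icc (2 * τ) (6 * τ)) (hm₀M₀ : m₀ ≤ M₀)
    (hδ : M₀ * δ ≤ (M₀ - m₀) / 2) :
    M₀ * (1 / D * (Γ / Λ) * δ * exp (-(6 * τ * Λ)) * (1 - exp (-(Λ * τ)))) ≤
      exp (-(Λ * T)) * (Γ / D * (M₀ - m₀) * T) := by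
  have hrate : (1 - exp (-(Λ * τ))) / Λ ≤ τ := by
    rw [div_le_iff₀ hΛ]; linarith [add_one_le_exp (-(Λ * τ))]
  have hrate0 : 0 ≤ (1 - exp (-(Λ * τ))) / Λ := by
    have : exp (-(Λ * τ)) ≤ 1 := exp_le_one_iff.2 (by nlinarith)
    exact div_nonneg (by linarith) hΛ.le
  have hdecay : exp (-(6 * τ * Λ)) ≤ exp (-(Λ * T)) := exp_le_exp.2 (by nlinarith [hT.2])
  calc M₀ * (1 / D * (Γ / Λ) * δ * exp (-(6 * τ * Λ)) * (1 - exp (-(Λ * τ))))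
      = Γ / D * exp (-(6 * τ * Λ)) * (M₀ * δ * ((1 - exp (-(Λ * τ))) / Λ)) := by
        field_simp
    _ ≤ Γ / D * exp (-(6 * τ * Λ)) * ((M₀ - m₀) / 2 * τ) := by gcongr
    _ ≤ Γ / D * exp (-(Λ * T)) * ((M₀ - m₀) / 2 * τ) := by gcongr
    _ ≤ exp (-(Λ * T)) * (Γ / D * (M₀ - m₀) * T) := by
        have : (M₀ - m₀) / 2 * τ ≤ (M₀ - m₀) * T := by nlinarith [hT.1]
        have := mul_le_mul_of_nonneg_left this
          (mul_nonneg (div_nonneg hΓ hD.le) (exp_pos (-(Λ * T))).le)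
        linarith

theorem stmt6_general
    (d N M h k : ℕ) (hN : 2 ≤ N)
    (τ : ℝ) (hτ : 0 < τ)
    (ψ ψs φ φs : EuclideanSpace ℝ (Fin d) → EuclideanSpace ℝ (Fin d) → ℝ)
    (hψ : Admissible ψ) (hψs : Admissible ψs) (hφ : Admissible φ) (hφs : Admissible φs)
    (x : Fin N → ℝ → EuclideanSpace ℝ (Fin d)) (y : Fin M → ℝ → EuclideanSpace ℝ (Fin d))
    (hsol : IsSol h k τ ψ ψs φ φs x y)
    (v : EuclideanSpace ℝ (Fin d)) (Λ Γ m₀ M₀ : ℝ)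
    (hΛ : Λ = Lam ψ ψs φ φs) (hΓ : Γ = Gam h k τ ψ ψs φ φs x y)
    (hM₀ : M₀ = MInit h k τ v x y)
    (hm₀pos : 0 < m₀) (hm₀M₀ : m₀ ≤ M₀)
    (σ : ℝ)
    (L : Fin N) (hLk : k ≤ (L : ℕ)) (hLm : ⟪x L 0, v⟫ = m₀) (δ₁ : ℝ)
    (hδ₁ : δ₁ = (1 - Real.exp (-(Λ * σ))) * (1 / (2 * ((N : ℝ) - 1))) * (Γ / Λ) * (1 - m₀ / M₀))
    :
    ∀ t ∈ Icc (2 * τ) (6 * τ), ∀ i : Fin N, (i : ℕ) < k →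
      ⟪x i t, v⟫ ≤ M₀ * (1 - (1 / ((N : ℝ) + h - 1)) * (Γ / Λ) * δ₁ *
        Real.exp (-(6 * τ * Λ)) * (1 - Real.exp (-(Λ * τ)))) := by
  obtain ⟨hψΛ, hψsΛ, hφΛ, hφsΛ⟩ := hΛ ▸ mem_Icc_Lam hψ hψs hφ hφs
  have hΛpos : 0 < Λ := (hψ.2.1 0 0).trans_le (hψΛ 0 0).2
  have hinit : InitialBound h k τ (fun z => ⟪z, v⟫) x y M₀ :=
    hM₀ ▸ initialBound_MInit v hsol.contx hsol.conty
  have hbound := fun t (ht : 0 ≤ t) =>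
    hsol.inner_le_of_initialBound hψΛ hψsΛ hφΛ hφsΛ hτ.le hinit ht
  have hy : ∀ t > 0, ∀ j : Fin M, (j : ℕ) < h → ⟪y j (t - τ), v⟫ ≤ M₀ := fun t ht j hj =>
    delayed_le_of_history hτ.le ht.le (hinit.y_lead j hj) fun s hs => (hbound s hs.1).2 j
  have hC := initialBound_Cinit (h := h) (k := k) (τ := τ) hsol.contx hsol.conty
  have hΓψ : ∀ t ≥ 0, ∀ i j, Γ ≤ ψ (x i t) (x j t) := fun t ht i j =>
    have hnorm := hsol.norm_le_of_initialBound hψΛ hψsΛ hφΛ hφsΛ hτ.le hC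
      ((norm_nonneg _).trans (hC.x_foll L hLk)) ht
    hΓ ▸ Gam_le hψ (hnorm i) (hnorm j)
  have hΓ0 : 0 ≤ Γ := hΓ ▸ Gam_nonneg hψ hψs hφ hφs
  have hN' : (2 : ℝ) ≤ N := by exact_mod_cast hN
  have hD : (0 : ℝ) < N + h - 1 := by linarith [(h.cast_nonneg : (0 : ℝ) ≤ h)]
  intro t ht i hi
  have hgap := hsol.exp_mul_le_sub_inner_lead hψΛ hφΛ hi (fun hLi => by omega)
    (fun t ht => (hbound t ht.le).1) hy hΓ0 (fun s hs => hΓψ s hs.le i L)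
    (hinit.x_lead i hi 0 ⟨by linarith, le_rfl⟩) (by linarith [ht.1] : 0 ≤ t)
  rw [hLm] at hgap
  have hδ := mul_delta_le_half_sub (σ := σ) hΛpos hΓ0 ((hΓψ 0 le_rfl L L).trans (hψΛ _ _).2)
    hN' (hm₀pos.trans_le hm₀M₀) hm₀M₀
  linear_combination hgap + mul_decrement_le hΛpos hΓ0 hD hτ ht hm₀M₀ (hδ₁ ▸ hδ)

theorem stmt6
    (d N M h k : ℕ) (hd : 1 ≤ d) (hN : 2 ≤ N) (hM2 : 2 ≤ M) (hMN : M ≤ N)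
    (hh1 : 1 ≤ h) (hhM : h < M) (hk1 : 1 ≤ k) (hkN : k < N)
    (τ : ℝ) (hτ : 0 < τ)
    (ψ ψs φ φs : EuclideanSpace ℝ (Fin d) → EuclideanSpace ℝ (Fin d) → ℝ)
    (hψ : Admissible ψ) (hψs : Admissible ψs) (hφ : Admissible φ) (hφs : Admissible φs)
    (x : Fin N → ℝ → EuclideanSpace ℝ (Fin d)) (y : Fin M → ℝ → EuclideanSpace ℝ (Fin d))
    (hsol : IsSol h k τ ψ ψs φ φs x y)
    (v : EuclideanSpace ℝ (Fin d)) (Λ Γ m₀ M₀ : ℝ)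
    (hΛ : Λ = Lam ψ ψs φ φs) (hΓ : Γ = Gam h k τ ψ ψs φ φs x y)
    (hm₀ : m₀ = mInit h k τ v x y) (hM₀ : M₀ = MInit h k τ v x y)
    (hm₀pos : 0 < m₀) (hm₀M₀ : m₀ ≤ M₀)
    (σ : ℝ) (hσ : σ = min τ ((M₀ - m₀) / (4 * Λ * M₀)))
    (L : Fin N) (hLk : k ≤ (L : ℕ)) (hLm : ⟪x L 0, v⟫ = m₀) (δ₁ : ℝ)
    (hδ₁ : δ₁ = (1 - Real.exp (-(Λ * σ))) * (1 / (2 * ((N : ℝ) - 1))) * (Γ / Λ) * (1 - m₀ / M₀))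
    :
    ∀ t ∈ Icc (2 * τ) (6 * τ), ∀ i : Fin N, (i : ℕ) < k →
      ⟪x i t, v⟫ ≤ M₀ * (1 - (1 / ((N : ℝ) + h - 1)) * (Γ / Λ) * δ₁ *
        Real.exp (-(6 * τ * Λ)) * (1 - Real.exp (-(Λ * τ)))) :=
  stmt6_general d N M h k hN τ hτ ψ ψs φ φs hψ hψs hφ hφs x y hsol v Λ Γ m₀ M₀ hΛ hΓ hM₀ hm₀pos
    hm₀M₀ σ L hLk hLm δ₁ hδ₁
end
end

section
/- Assume 0 < m_0 ≤ M_0 for a fixed vector v ∈ ℝ^d, suppose there exists L ∈ {k+1,…,N} with ⟨x_L(0), v⟩ = m_0, and set δ⁻₁ := (1 − e^{−Λσ}) (1/(2(N−1))) (Γ/Λ) (1 − m_0/M_0). Then for all t ∈ [4τ, 6τ] and every i ∈ {1,…,h}: ⟨y_i(t), v⟩ ≤ M_0 ( 1 − (1/((N+h−1)(M+k−1))) (Γ/Λ)^2 δ⁻₁ e^{−6τΛ} (1 − e^{−Λτ})^2 ). -/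
open Real Set Filter Topology
open scoped BigOperators RealInnerProductSpace

noncomputable section

private lemma mono_aux (g : ℝ → ℝ) (a b : ℝ) (hab : a ≤ b)
    (hc : ContinuousOn g (Icc a b))
    (hd : ∀ t ∈ Ioo a b, ∃ g', HasDerivAt g g' t ∧ 0 ≤ g') : g a ≤ g b := by
  have hmono : MonotoneOn g (Icc a b) := by
    apply monotoneOn_of_deriv_nonneg (convex_Icc a b) hc
    · intro t ht
      rw [interior_Icc] at ht
      obtain ⟨g', hg', _⟩ := hd t ht
      exact hg'.differentiableAt.differentiableWithinAt
    · intro t ht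
      rw [interior_Icc] at ht
      obtain ⟨g', hg', hg0⟩ := hd t ht
      rw [hg'.deriv]; exact hg0
  exact hmono (left_mem_Icc.2 hab) (right_mem_Icc.2 hab) hab

private lemma hd_inner {d : ℕ} {f : ℝ → EuclideanSpace ℝ (Fin d)} {D : EuclideanSpace ℝ (Fin d)}
    {t : ℝ} (hf : HasDerivAt f D t) (v : EuclideanSpace ℝ (Fin d)) :
    HasDerivAt (fun s => ⟪f s, v⟫) ⟪D, v⟫ t := by
  simpa using hf.inner ℝ (hasDerivAt_const t v)

private lemma bdd_family {S : Type*} [Finite S] (g : S → ℝ → ℝ) (hg : ∀ i, Continuous (g i))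
    (a b : ℝ) : BddAbove (Set.range fun p : S × (Icc a b) => g p.1 (p.2 : ℝ)) := by
  cases isEmpty_or_nonempty S
  · simp [Set.range_eq_empty]
  · have := Fintype.ofFinite S
    have hB : ∀ i : S, ∃ B, ∀ s ∈ Icc a b, g i s ≤ B := by
      intro i
      obtain ⟨B, hB⟩ := (isCompact_Icc (a := a) (b := b)).bddAbove_image (hg i).continuousOn
      exact ⟨B, fun s hs => hB ⟨s, hs, rfl⟩⟩
    choose B hB using hB
    refine ⟨(Finset.univ : Finset S).sup' Finset.univ_nonempty B, ?_⟩
    rintro z ⟨⟨i, s⟩, rfl⟩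
    exact le_trans (hB i s s.2) (Finset.le_sup' B (Finset.mem_univ i))

private lemma sum_le_aux {ι : Type*} (s : Finset ι) (c w : ι → ℝ) (p A CB n : ℝ)
    (hCB : 0 ≤ CB) (hn : (s.card : ℝ) ≤ n)
    (hc : ∀ j ∈ s, 0 ≤ c j ∧ c j ≤ CB) (hw : ∀ j ∈ s, w j ≤ A) (hp : p ≤ A) :
    ∑ j ∈ s, c j * (w j - p) ≤ n * (CB * (A - p)) := by
  have h1 : ∑ j ∈ s, c j * (w j - p) ≤ ∑ j ∈ s, CB * (A - p) := by
    apply Finset.sum_le_sum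
    intro j hj
    nlinarith [(hc j hj).1, (hc j hj).2, hw j hj]
  have h2 : ∑ j ∈ s, CB * (A - p) = (s.card : ℝ) * (CB * (A - p)) := by
    rw [Finset.sum_const, nsmul_eq_mul]
  have h3 : (s.card : ℝ) * (CB * (A - p)) ≤ n * (CB * (A - p)) := by
    apply mul_le_mul_of_nonneg_right hn
    exact mul_nonneg hCB (by linarith)
  linarith

private lemma two_sum_le {ι₁ ι₂ : Type*} (s₁ : Finset ι₁) (s₂ : Finset ι₂)
    (c₁ : ι₁ → ℝ) (w₁ : ι₁ → ℝ) (c₂ : ι₂ → ℝ) (w₂ : ι₂ → ℝ) (p A Λ K n₁ n₂ : ℝ)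
    (hK : 0 < K) (hΛ : 0 ≤ Λ)
    (hn₁ : (s₁.card : ℝ) ≤ n₁) (hn₂ : (s₂.card : ℝ) ≤ n₂) (hn : n₁ + n₂ ≤ K)
    (hc₁ : ∀ j ∈ s₁, 0 ≤ c₁ j ∧ c₁ j ≤ Λ / K) (hc₂ : ∀ j ∈ s₂, 0 ≤ c₂ j ∧ c₂ j ≤ Λ / K)
    (hw₁ : ∀ j ∈ s₁, w₁ j ≤ A) (hw₂ : ∀ j ∈ s₂, w₂ j ≤ A) (hp : p ≤ A) :
    (∑ j ∈ s₁, c₁ j * (w₁ j - p)) + ∑ j ∈ s₂, c₂ j * (w₂ j - p) ≤ Λ * (A - p) := by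
  have hLK : 0 ≤ Λ / K := div_nonneg hΛ hK.le
  have h1 := sum_le_aux s₁ c₁ w₁ p A (Λ / K) n₁ hLK hn₁ hc₁ hw₁ hp
  have h2 := sum_le_aux s₂ c₂ w₂ p A (Λ / K) n₂ hLK hn₂ hc₂ hw₂ hp
  have hq : 0 ≤ (Λ / K) * (A - p) := mul_nonneg hLK (by linarith)
  have hc : (n₁ + n₂) * ((Λ / K) * (A - p)) ≤ K * ((Λ / K) * (A - p)) :=
    mul_le_mul_of_nonneg_right hn hq
  have hK' : K * ((Λ / K) * (A - p)) = Λ * (A - p) := by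
    field_simp
  nlinarith [h1, h2]

private lemma sum_ge_aux {ι : Type*} (s : Finset ι) (c w : ι → ℝ) (u CB m : ℝ)
    (hCB : 0 ≤ CB) (hu : 0 ≤ u) (hm : (s.card : ℝ) ≤ m)
    (hc : ∀ j ∈ s, 0 ≤ c j ∧ c j ≤ CB) (hw : ∀ j ∈ s, 0 ≤ w j) :
    -(m * (CB * u)) ≤ ∑ j ∈ s, c j * (w j - u) := by
  have h1 : ∀ j ∈ s, -(CB * u) ≤ c j * (w j - u) := by
    intro j hj
    nlinarith [(hc j hj).1, (hc j hj).2, hw j hj]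
  have h2 := Finset.card_nsmul_le_sum s _ _ h1
  rw [nsmul_eq_mul] at h2
  have h3 : 0 ≤ CB * u := mul_nonneg hCB hu
  nlinarith [h2, h3, hm]

private lemma two_sum_ge {ι₁ ι₂ : Type*} [DecidableEq ι₁] (s₁ : Finset ι₁) (s₂ : Finset ι₂)
    (c₁ : ι₁ → ℝ) (w₁ : ι₁ → ℝ) (c₂ : ι₂ → ℝ) (w₂ : ι₂ → ℝ) (u Λ K n₁ n₂ γ : ℝ)
    (j₀ : ι₁) (hj₀ : j₀ ∈ s₁)
    (hK : 0 < K) (hΛ : 0 ≤ Λ) (hu : 0 ≤ u)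
    (hn₁ : (s₁.card : ℝ) ≤ n₁) (hn₂ : (s₂.card : ℝ) ≤ n₂) (hn : n₁ + n₂ ≤ K)
    (hc₁ : ∀ j ∈ s₁, 0 ≤ c₁ j ∧ c₁ j ≤ Λ / K) (hc₂ : ∀ j ∈ s₂, 0 ≤ c₂ j ∧ c₂ j ≤ Λ / K)
    (hw₁ : ∀ j ∈ s₁, 0 ≤ w₁ j) (hw₂ : ∀ j ∈ s₂, 0 ≤ w₂ j)
    (hγ : γ ≤ c₁ j₀) :
    γ * w₁ j₀ - Λ * u ≤ (∑ j ∈ s₁, c₁ j * (w₁ j - u)) + ∑ j ∈ s₂, c₂ j * (w₂ j - u) := by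
  have hLK : 0 ≤ Λ / K := div_nonneg hΛ hK.le
  have hcard1 : 1 ≤ s₁.card := Finset.card_pos.mpr ⟨j₀, hj₀⟩
  have hcarde : ((s₁.erase j₀).card : ℝ) ≤ n₁ - 1 := by
    rw [Finset.card_erase_of_mem hj₀, Nat.cast_sub hcard1]
    push_cast
    linarith
  have hA : -((n₁ - 1) * ((Λ / K) * u)) ≤ ∑ j ∈ s₁.erase j₀, c₁ j * (w₁ j - u) :=
    sum_ge_aux (s₁.erase j₀) c₁ w₁ u (Λ / K) (n₁ - 1) hLK hu hcarde
      (fun j hj => hc₁ j (Finset.mem_of_mem_erase hj))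
      (fun j hj => hw₁ j (Finset.mem_of_mem_erase hj))
  have hB : -(n₂ * ((Λ / K) * u)) ≤ ∑ j ∈ s₂, c₂ j * (w₂ j - u) :=
    sum_ge_aux s₂ c₂ w₂ u (Λ / K) n₂ hLK hu hn₂ hc₂ hw₂
  have hsplit : c₁ j₀ * (w₁ j₀ - u) + ∑ j ∈ s₁.erase j₀, c₁ j * (w₁ j - u)
      = ∑ j ∈ s₁, c₁ j * (w₁ j - u) := Finset.add_sum_erase s₁ (fun j => c₁ j * (w₁ j - u)) hj₀
  have hj0b := hc₁ j₀ hj₀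
  have hw0 := hw₁ j₀ hj₀
  have hterm0 : γ * w₁ j₀ - (Λ / K) * u ≤ c₁ j₀ * (w₁ j₀ - u) := by
    nlinarith [mul_le_mul_of_nonneg_right hγ hw0, hj0b.2, hu]
  have hfin : K * (Λ / K) = Λ := by field_simp
  nlinarith [hA, hB, hterm0, mul_nonneg hLK hu]

private lemma reach_contra (p : ℝ → ℝ) (Λ A t₀ t₁ : ℝ) (hΛ : 0 ≤ Λ) (ht : t₀ < t₁)
    (hc : Continuous p)
    (hder : ∀ s ∈ Ioo t₀ t₁, ∃ p', HasDerivAt p p' s ∧ p' ≤ Λ * (A - p s))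
    (h0 : p t₀ < A) (h1 : A ≤ p t₁) : False := by
  set g : ℝ → ℝ := fun u => (A - p u) * Real.exp (Λ * u) with hg
  have hmono : g t₀ ≤ g t₁ := by
    apply mono_aux g t₀ t₁ ht.le
    · exact ((continuous_const.sub hc).mul
        (Real.continuous_exp.comp (continuous_const.mul continuous_id))).continuousOn
    · intro s hs
      obtain ⟨p', hp', hple⟩ := hder s hs
      have h1' : HasDerivAt (fun u => A - p u) (0 - p') s := (hasDerivAt_const s A).sub hp'
      have h2' : HasDerivAt (fun u => Real.exp (Λ * u)) (Real.exp (Λ * s) * Λ) s := by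
        exact (Real.hasDerivAt_exp _).comp s (by simpa using (hasDerivAt_id s).const_mul Λ)
      refine ⟨_, h1'.mul h2', ?_⟩
      have he : 0 < Real.exp (Λ * s) := Real.exp_pos _
      nlinarith [mul_le_mul_of_nonneg_right hple he.le]
  have he0 : 0 < Real.exp (Λ * t₀) := Real.exp_pos _
  have he1 : 0 < Real.exp (Λ * t₁) := Real.exp_pos _
  have hg0 : 0 < g t₀ := by
    simp only [hg]
    nlinarith
  have hg1 : g t₁ ≤ 0 := by
    simp only [hg]
    nlinarith
  linarith

section Helpers

variable {d N M : ℕ} {h k : ℕ} {τ : ℝ}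
variable {ψ ψs φ φs : EuclideanSpace ℝ (Fin d) → EuclideanSpace ℝ (Fin d) → ℝ}
variable {x : Fin N → ℝ → EuclideanSpace ℝ (Fin d)} {y : Fin M → ℝ → EuclideanSpace ℝ (Fin d)}

private lemma xlead_deriv (hsol : IsSol h k τ ψ ψs φ φs x y) (i : Fin N) (hik : (i : ℕ) < k)
    (s : ℝ) (hs : 0 < s) (v : EuclideanSpace ℝ (Fin d)) :
    HasDerivAt (fun u => ⟪x i u, v⟫)
      ((∑ j ∈ Finset.univ.erase i,
          (ψ (x i s) (x j s) / ((N : ℝ) + h - 1)) * (⟪x j s, v⟫ - ⟪x i s, v⟫)) +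
        ∑ j ∈ Finset.univ.filter (fun j : Fin M => (j : ℕ) < h),
          (φ (x i s) (y j (s - τ)) / ((N : ℝ) + h - 1)) * (⟪y j (s - τ), v⟫ - ⟪x i s, v⟫)) s := by
  have h2 := hd_inner (hsol.odex_lead i hik s hs) v
  simpa only [inner_add_left, sum_inner, real_inner_smul_left, inner_sub_left] using h2

private lemma xfoll_deriv (hsol : IsSol h k τ ψ ψs φ φs x y) (i : Fin N) (hik : k ≤ (i : ℕ))
    (s : ℝ) (hs : 0 < s) (v : EuclideanSpace ℝ (Fin d)) :
    HasDerivAt (fun u => ⟪x i u, v⟫)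
      (∑ j ∈ Finset.univ.erase i,
          (ψ (x i s) (x j s) / ((N : ℝ) - 1)) * (⟪x j s, v⟫ - ⟪x i s, v⟫)) s := by
  have h2 := hd_inner (hsol.odex_foll i hik s hs) v
  simpa only [sum_inner, real_inner_smul_left, inner_sub_left] using h2

private lemma ylead_deriv (hsol : IsSol h k τ ψ ψs φ φs x y) (i : Fin M) (hik : (i : ℕ) < h)
    (s : ℝ) (hs : 0 < s) (v : EuclideanSpace ℝ (Fin d)) :
    HasDerivAt (fun u => ⟪y i u, v⟫)
      ((∑ j ∈ Finset.univ.erase i,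
          (ψs (y i s) (y j s) / ((M : ℝ) + k - 1)) * (⟪y j s, v⟫ - ⟪y i s, v⟫)) +
        ∑ j ∈ Finset.univ.filter (fun j : Fin N => (j : ℕ) < k),
          (φs (y i s) (x j (s - τ)) / ((M : ℝ) + k - 1)) * (⟪x j (s - τ), v⟫ - ⟪y i s, v⟫)) s := by
  have h2 := hd_inner (hsol.odey_lead i hik s hs) v
  simpa only [inner_add_left, sum_inner, real_inner_smul_left, inner_sub_left] using h2

private lemma yfoll_deriv (hsol : IsSol h k τ ψ ψs φ φs x y) (i : Fin M) (hik : h ≤ (i : ℕ))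
    (s : ℝ) (hs : 0 < s) (v : EuclideanSpace ℝ (Fin d)) :
    HasDerivAt (fun u => ⟪y i u, v⟫)
      (∑ j ∈ Finset.univ.erase i,
          (ψs (y i s) (y j s) / ((M : ℝ) - 1)) * (⟪y j s, v⟫ - ⟪y i s, v⟫)) s := by
  have h2 := hd_inner (hsol.odey_foll i hik s hs) v
  simpa only [sum_inner, real_inner_smul_left, inner_sub_left] using h2

private lemma card_filter_lt_le (m n : ℕ) :
    (((Finset.univ : Finset (Fin m)).filter (fun j : Fin m => (j : ℕ) < n)).card : ℝ) ≤ n := by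
  have hle : ((Finset.univ : Finset (Fin m)).filter (fun j : Fin m => (j : ℕ) < n)).card
      ≤ (Finset.range n).card := by
    refine Finset.card_le_card_of_injOn (fun j => (j : ℕ)) ?_ ?_
    · intro a ha
      exact Finset.mem_range.mpr (Finset.mem_filter.mp ha).2
    · intro a _ b _ hab
      exact Fin.ext hab
  rw [Finset.card_range] at hle
  exact_mod_cast hle

private lemma card_erase_real {n : ℕ} (i : Fin n) :
    (((Finset.univ : Finset (Fin n)).erase i).card : ℝ) = (n : ℝ) - 1 := by
  rw [Finset.card_erase_of_mem (Finset.mem_univ i), Finset.card_univ, Fintype.card_fin,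
    Nat.cast_sub i.pos]
  simp

private lemma invariance (hτ : 0 < τ) (hsol : IsSol h k τ ψ ψs φ φs x y)
    {Λ : ℝ} (hΛ0 : 0 < Λ)
    (hψb : ∀ z₁ z₂, 0 ≤ ψ z₁ z₂ ∧ ψ z₁ z₂ ≤ Λ)
    (hψsb : ∀ z₁ z₂, 0 ≤ ψs z₁ z₂ ∧ ψs z₁ z₂ ≤ Λ)
    (hφb : ∀ z₁ z₂, 0 ≤ φ z₁ z₂ ∧ φ z₁ z₂ ≤ Λ)
    (hφsb : ∀ z₁ z₂, 0 ≤ φs z₁ z₂ ∧ φs z₁ z₂ ≤ Λ)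
    (hN : 2 ≤ N) (hM : 2 ≤ M)
    (w : EuclideanSpace ℝ (Fin d)) (R : ℝ)
    (hxl : ∀ i : Fin N, (i : ℕ) < k → ∀ s ∈ Icc (-τ) (0 : ℝ), ⟪x i s, w⟫ ≤ R)
    (hxf : ∀ i : Fin N, k ≤ (i : ℕ) → ⟪x i 0, w⟫ ≤ R)
    (hyl : ∀ j : Fin M, (j : ℕ) < h → ∀ s ∈ Icc (-τ) (0 : ℝ), ⟪y j s, w⟫ ≤ R)
    (hyf : ∀ j : Fin M, h ≤ (j : ℕ) → ⟪y j 0, w⟫ ≤ R) :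
    ∀ T, 0 ≤ T → (∀ i, ⟪x i T, w⟫ ≤ R) ∧ (∀ j, ⟪y j T, w⟫ ≤ R) := by
  have hNr : (2:ℝ) ≤ (N:ℝ) := by exact_mod_cast hN
  have hMr : (2:ℝ) ≤ (M:ℝ) := by exact_mod_cast hM
  have hhr : (0:ℝ) ≤ (h:ℝ) := Nat.cast_nonneg h
  have hkr : (0:ℝ) ≤ (k:ℝ) := Nat.cast_nonneg k
  have hK1 : (0:ℝ) < (N:ℝ) + h - 1 := by linarith
  have hK2 : (0:ℝ) < (M:ℝ) + k - 1 := by linarith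
  have hN1 : (0:ℝ) < (N:ℝ) - 1 := by linarith
  have hM1 : (0:ℝ) < (M:ℝ) - 1 := by linarith
  have hx0 : ∀ i : Fin N, ⟪x i 0, w⟫ ≤ R := by
    intro i
    rcases lt_or_ge (i : ℕ) k with hik | hik
    · exact hxl i hik 0 ⟨neg_nonpos.2 hτ.le, le_refl 0⟩
    · exact hxf i hik
  have hy0 : ∀ j : Fin M, ⟪y j 0, w⟫ ≤ R := by
    intro j
    rcases lt_or_ge (j : ℕ) h with hjh | hjh
    · exact hyl j hjh 0 ⟨neg_nonpos.2 hτ.le, le_refl 0⟩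
    · exact hyf j hjh
  intro T hT
  have key : ∀ ε, 0 < ε → (∀ i, ⟪x i T, w⟫ ≤ R + ε) ∧ (∀ j, ⟪y j T, w⟫ ≤ R + ε) := by
    intro ε hε
    set S : Set ℝ := {s | s ∈ Icc 0 T ∧
      ((∃ i, R + ε ≤ ⟪x i s, w⟫) ∨ (∃ j, R + ε ≤ ⟪y j s, w⟫))} with hSdef
    have hempty : S = ∅ := by
      by_contra hne
      have hSne : S.Nonempty := Set.nonempty_iff_ne_empty.mpr hne
      have hclosed : IsClosed S := by
        have hrepr : S = Icc 0 T ∩ ((⋃ i, {s | R + ε ≤ ⟪x i s, w⟫}) ∪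
            ⋃ j, {s | R + ε ≤ ⟪y j s, w⟫}) := by
          ext s
          simp only [hSdef, Set.mem_inter_iff, Set.mem_setOf_eq, Set.mem_union, Set.mem_iUnion]
        rw [hrepr]
        exact isClosed_Icc.inter
          ((isClosed_iUnion_of_finite fun i =>
              isClosed_le continuous_const ((hsol.contx i).inner continuous_const)).union
           (isClosed_iUnion_of_finite fun j =>
              isClosed_le continuous_const ((hsol.conty j).inner continuous_const)))
      have hbdd : BddBelow S := ⟨0, fun s hs => hs.1.1⟩
      have ht₀S : sInf S ∈ S := hclosed.csInf_mem hSne hbdd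
      set t₀ := sInf S with ht₀def
      have ht₀0 : 0 ≤ t₀ := ht₀S.1.1
      have ht₀pos : 0 < t₀ := by
        rcases ht₀0.lt_or_eq with hlt | heq
        · exact hlt
        · exfalso
          rcases ht₀S.2 with ⟨i, hi⟩ | ⟨j, hj⟩
          · rw [← heq] at hi; linarith [hx0 i]
          · rw [← heq] at hj; linarith [hy0 j]
      have hbefore : ∀ s, 0 ≤ s → s < t₀ →
          (∀ i : Fin N, ⟪x i s, w⟫ ≤ R + ε) ∧ (∀ j : Fin M, ⟪y j s, w⟫ ≤ R + ε) := by
        intro s hs0 hst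
        have hsnot : s ∉ S := fun hmem => absurd (csInf_le hbdd hmem) (not_le.2 hst)
        have hsIcc : s ∈ Icc (0:ℝ) T := ⟨hs0, hst.le.trans ht₀S.1.2⟩
        constructor
        · intro i
          by_contra hcon; push_neg at hcon
          exact hsnot ⟨hsIcc, Or.inl ⟨i, hcon.le⟩⟩
        · intro j
          by_contra hcon; push_neg at hcon
          exact hsnot ⟨hsIcc, Or.inr ⟨j, hcon.le⟩⟩
      have hhistX : ∀ i : Fin N, (i : ℕ) < k → ∀ s, -τ ≤ s → s < t₀ → ⟪x i s, w⟫ ≤ R + ε := by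
        intro i hik s hs hst
        rcases le_or_gt s 0 with h0 | h0
        · linarith [hxl i hik s ⟨hs, h0⟩]
        · exact (hbefore s h0.le hst).1 i
      have hhistY : ∀ j : Fin M, (j : ℕ) < h → ∀ s, -τ ≤ s → s < t₀ → ⟪y j s, w⟫ ≤ R + ε := by
        intro j hjh s hs hst
        rcases le_or_gt s 0 with h0 | h0
        · linarith [hyl j hjh s ⟨hs, h0⟩]
        · exact (hbefore s h0.le hst).2 j
      rcases ht₀S.2 with ⟨i, hi⟩ | ⟨j, hj⟩
      · refine reach_contra (fun u => ⟪x i u, w⟫) Λ (R + ε) 0 t₀ hΛ0.le ht₀pos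
          ((hsol.contx i).inner continuous_const) ?_ (by linarith [hx0 i]) hi
        intro s hs
        have hp : ⟪x i s, w⟫ ≤ R + ε := (hbefore s hs.1.le hs.2).1 i
        rcases lt_or_ge (i : ℕ) k with hik | hik
        · refine ⟨_, xlead_deriv hsol i hik s hs.1 w, ?_⟩
          apply two_sum_le _ _ _ _ _ _ _ (R + ε) Λ ((N:ℝ) + h - 1) ((N:ℝ) - 1) (h:ℝ)
            hK1 hΛ0.le (le_of_eq (card_erase_real i)) (card_filter_lt_le M h) (by linarith)
          · exact fun j _ => ⟨div_nonneg (hψb _ _).1 hK1.le,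
              (div_le_div_iff_of_pos_right hK1).mpr (hψb _ _).2⟩
          · exact fun j _ => ⟨div_nonneg (hφb _ _).1 hK1.le,
              (div_le_div_iff_of_pos_right hK1).mpr (hφb _ _).2⟩
          · exact fun j _ => (hbefore s hs.1.le hs.2).1 j
          · exact fun j hj => hhistY j (Finset.mem_filter.mp hj).2 (s - τ)
              (by linarith [hs.1.le]) (by linarith [hs.2, hτ])
          · exact hp
        · refine ⟨_, xfoll_deriv hsol i hik s hs.1 w, ?_⟩
          have := two_sum_le (Finset.univ.erase i) (∅ : Finset (Fin M))
            (fun j => ψ (x i s) (x j s) / ((N:ℝ) - 1)) (fun j => ⟪x j s, w⟫)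
            (fun _ => 0) (fun _ => 0) ⟪x i s, w⟫ (R + ε) Λ ((N:ℝ) - 1) ((N:ℝ) - 1) 0
            hN1 hΛ0.le (le_of_eq (card_erase_real i)) (by simp) (by linarith)
            (fun j _ => ⟨div_nonneg (hψb _ _).1 hN1.le,
              (div_le_div_iff_of_pos_right hN1).mpr (hψb _ _).2⟩)
            (fun j hj => absurd hj (by simp))
            (fun j _ => (hbefore s hs.1.le hs.2).1 j)
            (fun j hj => absurd hj (by simp)) hp
          simpa using this
      · refine reach_contra (fun u => ⟪y j u, w⟫) Λ (R + ε) 0 t₀ hΛ0.le ht₀pos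
          ((hsol.conty j).inner continuous_const) ?_ (by linarith [hy0 j]) hj
        intro s hs
        have hp : ⟪y j s, w⟫ ≤ R + ε := (hbefore s hs.1.le hs.2).2 j
        rcases lt_or_ge (j : ℕ) h with hjh | hjh
        · refine ⟨_, ylead_deriv hsol j hjh s hs.1 w, ?_⟩
          apply two_sum_le _ _ _ _ _ _ _ (R + ε) Λ ((M:ℝ) + k - 1) ((M:ℝ) - 1) (k:ℝ)
            hK2 hΛ0.le (le_of_eq (card_erase_real j)) (card_filter_lt_le N k) (by linarith)
          · exact fun j' _ => ⟨div_nonneg (hψsb _ _).1 hK2.le,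
              (div_le_div_iff_of_pos_right hK2).mpr (hψsb _ _).2⟩
          · exact fun j' _ => ⟨div_nonneg (hφsb _ _).1 hK2.le,
              (div_le_div_iff_of_pos_right hK2).mpr (hφsb _ _).2⟩
          · exact fun j' _ => (hbefore s hs.1.le hs.2).2 j'
          · exact fun j' hj' => hhistX j' (Finset.mem_filter.mp hj').2 (s - τ)
              (by linarith [hs.1.le]) (by linarith [hs.2, hτ])
          · exact hp
        · refine ⟨_, yfoll_deriv hsol j hjh s hs.1 w, ?_⟩
          have := two_sum_le (Finset.univ.erase j) (∅ : Finset (Fin N))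
            (fun j' => ψs (y j s) (y j' s) / ((M:ℝ) - 1)) (fun j' => ⟪y j' s, w⟫)
            (fun _ => 0) (fun _ => 0) ⟪y j s, w⟫ (R + ε) Λ ((M:ℝ) - 1) ((M:ℝ) - 1) 0
            hM1 hΛ0.le (le_of_eq (card_erase_real j)) (by simp) (by linarith)
            (fun j' _ => ⟨div_nonneg (hψsb _ _).1 hM1.le,
              (div_le_div_iff_of_pos_right hM1).mpr (hψsb _ _).2⟩)
            (fun j' hj' => absurd hj' (by simp))
            (fun j' _ => (hbefore s hs.1.le hs.2).2 j')
            (fun j' hj' => absurd hj' (by simp)) hp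
          simpa using this
    have hTmem : T ∈ Icc (0:ℝ) T := ⟨hT, le_refl T⟩
    constructor
    · intro i
      by_contra hcon; push_neg at hcon
      have : T ∈ S := ⟨hTmem, Or.inl ⟨i, hcon.le⟩⟩
      rw [hempty] at this
      exact this
    · intro j
      by_contra hcon; push_neg at hcon
      have : T ∈ S := ⟨hTmem, Or.inr ⟨j, hcon.le⟩⟩
      rw [hempty] at this
      exact this
  constructor
  · intro i
    by_contra hcon; push_neg at hcon
    have := (key ((⟪x i T, w⟫ - R) / 2) (by linarith)).1 i
    linarith
  · intro j
    by_contra hcon; push_neg at hcon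
    have := (key ((⟪y j T, w⟫ - R) / 2) (by linarith)).2 j
    linarith

end Helpers

set_option maxHeartbeats 1000000 in
theorem stmt7
    (d N M h k : ℕ) (hd : 1 ≤ d) (hN : 2 ≤ N) (hM2 : 2 ≤ M) (hMN : M ≤ N)
    (hh1 : 1 ≤ h) (hhM : h < M) (hk1 : 1 ≤ k) (hkN : k < N)
    (τ : ℝ) (hτ : 0 < τ)
    (ψ ψs φ φs : EuclideanSpace ℝ (Fin d) → EuclideanSpace ℝ (Fin d) → ℝ)
    (hψ : Admissible ψ) (hψs : Admissible ψs) (hφ : Admissible φ) (hφs : Admissible φs)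
    (x : Fin N → ℝ → EuclideanSpace ℝ (Fin d)) (y : Fin M → ℝ → EuclideanSpace ℝ (Fin d))
    (hsol : IsSol h k τ ψ ψs φ φs x y)
    (v : EuclideanSpace ℝ (Fin d)) (Λ Γ m₀ M₀ : ℝ)
    (hΛ : Λ = Lam ψ ψs φ φs) (hΓ : Γ = Gam h k τ ψ ψs φ φs x y)
    (hm₀ : m₀ = mInit h k τ v x y) (hM₀ : M₀ = MInit h k τ v x y)
    (hm₀pos : 0 < m₀) (hm₀M₀ : m₀ ≤ M₀)
    (σ : ℝ) (hσ : σ = min τ ((M₀ - m₀) / (4 * Λ * M₀)))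
    (L : Fin N) (hLk : k ≤ (L : ℕ)) (hLm : ⟪x L 0, v⟫ = m₀) (δ₁ : ℝ)
    (hδ₁ : δ₁ = (1 - Real.exp (-(Λ * σ))) * (1 / (2 * ((N : ℝ) - 1))) * (Γ / Λ) * (1 - m₀ / M₀))
    :
    ∀ t ∈ Icc (4 * τ) (6 * τ), ∀ i : Fin M, (i : ℕ) < h →
      ⟪y i t, v⟫ ≤ M₀ * (1 - (1 / (((N : ℝ) + h - 1) * ((M : ℝ) + k - 1))) * (Γ / Λ) ^ 2 * δ₁ *
        Real.exp (-(6 * τ * Λ)) * (1 - Real.exp (-(Λ * τ))) ^ 2) := by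
  -- numeric setup
  have hNr : (2:ℝ) ≤ (N:ℝ) := by exact_mod_cast hN
  have hMr : (2:ℝ) ≤ (M:ℝ) := by exact_mod_cast hM2
  have hhr : (1:ℝ) ≤ (h:ℝ) := by exact_mod_cast hh1
  have hkr : (1:ℝ) ≤ (k:ℝ) := by exact_mod_cast hk1
  have hK1 : (0:ℝ) < (N:ℝ) + h - 1 := by linarith
  have hK2 : (0:ℝ) < (M:ℝ) + k - 1 := by linarith
  have hN1 : (0:ℝ) < (N:ℝ) - 1 := by linarith
  have hN1' : (1:ℝ) ≤ (N:ℝ) - 1 := by linarith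
  -- Λ bounds
  have hψΛ : ∀ z₁ z₂, 0 ≤ ψ z₁ z₂ ∧ ψ z₁ z₂ ≤ Λ := by
    intro z₁ z₂
    refine ⟨(hψ.2.1 z₁ z₂).le, ?_⟩
    rw [hΛ]
    exact le_trans (le_ciSup hψ.2.2 (z₁, z₂)) (le_trans (le_max_left _ _) (le_max_left _ _))
  have hψsΛ : ∀ z₁ z₂, 0 ≤ ψs z₁ z₂ ∧ ψs z₁ z₂ ≤ Λ := by
    intro z₁ z₂
    refine ⟨(hψs.2.1 z₁ z₂).le, ?_⟩
    rw [hΛ]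
    exact le_trans (le_ciSup hψs.2.2 (z₁, z₂)) (le_trans (le_max_right _ _) (le_max_left _ _))
  have hφΛ : ∀ z₁ z₂, 0 ≤ φ z₁ z₂ ∧ φ z₁ z₂ ≤ Λ := by
    intro z₁ z₂
    refine ⟨(hφ.2.1 z₁ z₂).le, ?_⟩
    rw [hΛ]
    exact le_trans (le_ciSup hφ.2.2 (z₁, z₂)) (le_trans (le_max_left _ _) (le_max_right _ _))
  have hφsΛ : ∀ z₁ z₂, 0 ≤ φs z₁ z₂ ∧ φs z₁ z₂ ≤ Λ := by
    intro z₁ z₂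
    refine ⟨(hφs.2.1 z₁ z₂).le, ?_⟩
    rw [hΛ]
    exact le_trans (le_ciSup hφs.2.2 (z₁, z₂)) (le_trans (le_max_right _ _) (le_max_right _ _))
  have hΛpos : 0 < Λ := lt_of_lt_of_le (hψ.2.1 0 0) (hψΛ 0 0).2
  -- M₀ bounds on initial data
  have hM0xl : ∀ i : Fin N, (i : ℕ) < k → ∀ s ∈ Icc (-τ) (0:ℝ), ⟪x i s, v⟫ ≤ M₀ := by
    intro i hik s hs
    rw [hM₀]
    have hb := bdd_family (fun (p : {i : Fin N // (i : ℕ) < k}) s => ⟪x p.1 s, v⟫)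
      (fun p => (hsol.contx p.1).inner continuous_const) (-τ) 0
    exact le_trans (le_ciSup hb (⟨⟨i, hik⟩, ⟨s, hs⟩⟩ :
      {i : Fin N // (i : ℕ) < k} × (Icc (-τ) (0:ℝ))))
      (le_trans (le_max_left _ _) (le_max_left _ _))
  have hM0xf : ∀ i : Fin N, k ≤ (i : ℕ) → ⟪x i 0, v⟫ ≤ M₀ := by
    intro i hik
    rw [hM₀]
    exact le_trans (le_ciSup (f := fun p : {i : Fin N // k ≤ (i : ℕ)} => ⟪x p.1 0, v⟫)
      (Set.Finite.bddAbove (Set.finite_range _)) ⟨i, hik⟩)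
      (le_trans (le_max_right _ _) (le_max_left _ _))
  have hM0yl : ∀ j : Fin M, (j : ℕ) < h → ∀ s ∈ Icc (-τ) (0:ℝ), ⟪y j s, v⟫ ≤ M₀ := by
    intro j hjh s hs
    rw [hM₀]
    have hb := bdd_family (fun (p : {j : Fin M // (j : ℕ) < h}) s => ⟪y p.1 s, v⟫)
      (fun p => (hsol.conty p.1).inner continuous_const) (-τ) 0
    exact le_trans (le_ciSup hb (⟨⟨j, hjh⟩, ⟨s, hs⟩⟩ :
      {j : Fin M // (j : ℕ) < h} × (Icc (-τ) (0:ℝ))))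
      (le_trans (le_max_left _ _) (le_max_right _ _))
  have hM0yf : ∀ j : Fin M, h ≤ (j : ℕ) → ⟪y j 0, v⟫ ≤ M₀ := by
    intro j hjh
    rw [hM₀]
    exact le_trans (le_ciSup (f := fun p : {j : Fin M // h ≤ (j : ℕ)} => ⟪y p.1 0, v⟫)
      (Set.Finite.bddAbove (Set.finite_range _)) ⟨j, hjh⟩)
      (le_trans (le_max_right _ _) (le_max_right _ _))
  -- C bounds on initial data
  have hCxl : ∀ i : Fin N, (i : ℕ) < k → ∀ s ∈ Icc (-τ) (0:ℝ), ‖x i s‖ ≤ Cinit h k τ x y := by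
    intro i hik s hs
    have hb := bdd_family (fun (p : {i : Fin N // (i : ℕ) < k}) s => ‖x p.1 s‖)
      (fun p => (hsol.contx p.1).norm) (-τ) 0
    exact le_trans (le_ciSup hb (⟨⟨i, hik⟩, ⟨s, hs⟩⟩ :
      {i : Fin N // (i : ℕ) < k} × (Icc (-τ) (0:ℝ))))
      (le_trans (le_max_left _ _) (le_max_left _ _))
  have hCxf : ∀ i : Fin N, k ≤ (i : ℕ) → ‖x i 0‖ ≤ Cinit h k τ x y := by
    intro i hik
    exact le_trans (le_ciSup (f := fun p : {i : Fin N // k ≤ (i : ℕ)} => ‖x p.1 0‖)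
      (Set.Finite.bddAbove (Set.finite_range _)) ⟨i, hik⟩)
      (le_trans (le_max_right _ _) (le_max_left _ _))
  have hCyl : ∀ j : Fin M, (j : ℕ) < h → ∀ s ∈ Icc (-τ) (0:ℝ), ‖y j s‖ ≤ Cinit h k τ x y := by
    intro j hjh s hs
    have hb := bdd_family (fun (p : {j : Fin M // (j : ℕ) < h}) s => ‖y p.1 s‖)
      (fun p => (hsol.conty p.1).norm) (-τ) 0
    exact le_trans (le_ciSup hb (⟨⟨j, hjh⟩, ⟨s, hs⟩⟩ :
      {j : Fin M // (j : ℕ) < h} × (Icc (-τ) (0:ℝ))))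
      (le_trans (le_max_left _ _) (le_max_right _ _))
  have hCyf : ∀ j : Fin M, h ≤ (j : ℕ) → ‖y j 0‖ ≤ Cinit h k τ x y := by
    intro j hjh
    exact le_trans (le_ciSup (f := fun p : {j : Fin M // h ≤ (j : ℕ)} => ‖y p.1 0‖)
      (Set.Finite.bddAbove (Set.finite_range _)) ⟨j, hjh⟩)
      (le_trans (le_max_right _ _) (le_max_right _ _))
  have hC0 : 0 ≤ Cinit h k τ x y := le_trans (norm_nonneg (x L 0)) (hCxf L hLk)
  -- invariance along v
  have hInvV := invariance hτ hsol hΛpos hψΛ hψsΛ hφΛ hφsΛ hN hM2 v M₀ hM0xl hM0xf hM0yl hM0yf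
  -- norm invariance
  have hInvN : ∀ T, 0 ≤ T → (∀ i, ‖x i T‖ ≤ Cinit h k τ x y) ∧
      (∀ j, ‖y j T‖ ≤ Cinit h k τ x y) := by
    intro T hT
    have base : ∀ w : EuclideanSpace ℝ (Fin d),
        (∀ i, ⟪x i T, w⟫ ≤ Cinit h k τ x y * ‖w‖) ∧
        (∀ j, ⟪y j T, w⟫ ≤ Cinit h k τ x y * ‖w‖) := by
      intro w
      refine invariance hτ hsol hΛpos hψΛ hψsΛ hφΛ hφsΛ hN hM2 w (Cinit h k τ x y * ‖w‖)
        ?_ ?_ ?_ ?_ T hT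
      · intro i hik s hs
        exact le_trans (real_inner_le_norm _ _)
          (mul_le_mul_of_nonneg_right (hCxl i hik s hs) (norm_nonneg w))
      · intro i hik
        exact le_trans (real_inner_le_norm _ _)
          (mul_le_mul_of_nonneg_right (hCxf i hik) (norm_nonneg w))
      · intro j hjh s hs
        exact le_trans (real_inner_le_norm _ _)
          (mul_le_mul_of_nonneg_right (hCyl j hjh s hs) (norm_nonneg w))
      · intro j hjh
        exact le_trans (real_inner_le_norm _ _)
          (mul_le_mul_of_nonneg_right (hCyf j hjh) (norm_nonneg w))
    constructor
    · intro i
      have h1 := (base (x i T)).1 i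
      rw [real_inner_self_eq_norm_mul_norm] at h1
      rcases (norm_nonneg (x i T)).lt_or_eq with hpos | heq
      · exact le_of_mul_le_mul_right h1 hpos
      · rw [← heq]; exact hC0
    · intro j
      have h1 := (base (y j T)).2 j
      rw [real_inner_self_eq_norm_mul_norm] at h1
      rcases (norm_nonneg (y j T)).lt_or_eq with hpos | heq
      · exact le_of_mul_le_mul_right h1 hpos
      · rw [← heq]; exact hC0
  -- Γ facts
  have hΓ0 : 0 ≤ Γ := by
    rw [hΓ]
    refine le_min (le_min ?_ ?_) (le_min ?_ ?_)
    · exact Real.iInf_nonneg fun p => (hψ.2.1 _ _).le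
    · exact Real.iInf_nonneg fun p => (hψs.2.1 _ _).le
    · exact Real.iInf_nonneg fun p => (hφ.2.1 _ _).le
    · exact Real.iInf_nonneg fun p => (hφs.2.1 _ _).le
  have hΓψle : ∀ z₁ z₂, ‖z₁‖ ≤ Cinit h k τ x y → ‖z₂‖ ≤ Cinit h k τ x y → Γ ≤ ψ z₁ z₂ := by
    intro z₁ z₂ h1 h2
    rw [hΓ]
    refine le_trans (min_le_left _ _) (le_trans (min_le_left _ _) ?_)
    exact ciInf_le ⟨0, by rintro r ⟨p, rfl⟩; exact (hψ.2.1 _ _).le⟩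
      (⟨(z₁, z₂), ⟨h1, h2⟩⟩ : {z : EuclideanSpace ℝ (Fin d) × EuclideanSpace ℝ (Fin d) //
        ‖z.1‖ ≤ Cinit h k τ x y ∧ ‖z.2‖ ≤ Cinit h k τ x y})
  have hΓφsle : ∀ z₁ z₂, ‖z₁‖ ≤ Cinit h k τ x y → ‖z₂‖ ≤ Cinit h k τ x y → Γ ≤ φs z₁ z₂ := by
    intro z₁ z₂ h1 h2
    rw [hΓ]
    refine le_trans (min_le_right _ _) (le_trans (min_le_right _ _) ?_)
    exact ciInf_le ⟨0, by rintro r ⟨p, rfl⟩; exact (hφs.2.1 _ _).le⟩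
      (⟨(z₁, z₂), ⟨h1, h2⟩⟩ : {z : EuclideanSpace ℝ (Fin d) × EuclideanSpace ℝ (Fin d) //
        ‖z.1‖ ≤ Cinit h k τ x y ∧ ‖z.2‖ ≤ Cinit h k τ x y})
  have hΓΛ : Γ ≤ Λ :=
    le_trans (hΓψle 0 0 (by simpa using hC0) (by simpa using hC0)) (hψΛ 0 0).2
  -- history bounds along v
  have hxAllV : ∀ i : Fin N, (i : ℕ) < k → ∀ s, -τ ≤ s → ⟪x i s, v⟫ ≤ M₀ := by
    intro i hik s hs
    rcases le_or_gt s 0 with h0 | h0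
    · exact hM0xl i hik s ⟨hs, h0⟩
    · exact (hInvV s h0.le).1 i
  have hyAllV : ∀ j : Fin M, (j : ℕ) < h → ∀ s, -τ ≤ s → ⟪y j s, v⟫ ≤ M₀ := by
    intro j hjh s hs
    rcases le_or_gt s 0 with h0 | h0
    · exact hM0yl j hjh s ⟨hs, h0⟩
    · exact (hInvV s h0.le).2 j
  set K1 : ℝ := (N:ℝ) + h - 1 with hK1def
  set K2 : ℝ := (M:ℝ) + k - 1 with hK2def
  -- Step 2 : lower bound for the gap of the follower L
  have hstep2 : ∀ s, 0 ≤ s → (M₀ - m₀) * Real.exp (-(Λ * s)) ≤ M₀ - ⟪x L s, v⟫ := by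
    intro s hs0
    rcases hs0.lt_or_eq with hs | hs
    · have hmono : (M₀ - ⟪x L 0, v⟫) * Real.exp (Λ * 0) ≤
          (M₀ - ⟪x L s, v⟫) * Real.exp (Λ * s) := by
        apply mono_aux (fun u => (M₀ - ⟪x L u, v⟫) * Real.exp (Λ * u)) 0 s hs.le
        · exact ((continuous_const.sub ((hsol.contx L).inner continuous_const)).mul
            (Real.continuous_exp.comp (continuous_const.mul continuous_id))).continuousOn
        · intro u hu
          obtain ⟨D', hd', hDle⟩ : ∃ D', HasDerivAt (fun r => ⟪x L r, v⟫) D' u ∧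
              D' ≤ Λ * (M₀ - ⟪x L u, v⟫) := by
            refine ⟨_, xfoll_deriv hsol L hLk u hu.1 v, ?_⟩
            have hp : ⟪x L u, v⟫ ≤ M₀ := (hInvV u hu.1.le).1 L
            have := two_sum_le (Finset.univ.erase L) (∅ : Finset (Fin M))
              (fun j => ψ (x L u) (x j u) / ((N:ℝ) - 1)) (fun j => ⟪x j u, v⟫)
              (fun _ => 0) (fun _ => 0) ⟪x L u, v⟫ M₀ Λ ((N:ℝ) - 1) ((N:ℝ) - 1) 0
              hN1 hΛpos.le (le_of_eq (card_erase_real L)) (by simp) (by linarith)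
              (fun j _ => ⟨div_nonneg (hψΛ _ _).1 hN1.le,
                (div_le_div_iff_of_pos_right hN1).mpr (hψΛ _ _).2⟩)
              (fun j hj => absurd hj (by simp))
              (fun j _ => (hInvV u hu.1.le).1 j)
              (fun j hj => absurd hj (by simp)) hp
            simpa using this
          have h1 : HasDerivAt (fun r => M₀ - ⟪x L r, v⟫) (0 - D') u :=
            (hasDerivAt_const u M₀).sub hd'
          have h2 : HasDerivAt (fun r => Real.exp (Λ * r)) (Real.exp (Λ * u) * Λ) u :=
            (Real.hasDerivAt_exp _).comp u (by simpa using (hasDerivAt_id u).const_mul Λ)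
          refine ⟨_, h1.mul h2, ?_⟩
          have he : 0 < Real.exp (Λ * u) := Real.exp_pos _
          nlinarith [mul_le_mul_of_nonneg_right hDle he.le]
      have hE := Real.exp_pos (Λ * s)
      rw [Real.exp_neg, ← div_eq_mul_inv, div_le_iff₀ hE]
      simpa [hLm] using hmono
    · rw [← hs]
      simp [hLm]
  -- the leader j₀ of the x population
  have hNpos : 0 < N := by omega
  set j₀ : Fin N := ⟨0, hNpos⟩ with hj₀def
  have hj₀k : (j₀ : ℕ) < k := hk1
  have hLj₀ : L ≠ j₀ := by
    intro hE
    have : (L : ℕ) = 0 := by rw [hE]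
    omega
  -- Step 3 : lower bound for the gap of the leader j₀
  have hstep3 : ∀ s, 0 ≤ s →
      Γ / K1 * (M₀ - m₀) * s * Real.exp (-(Λ * s)) ≤ M₀ - ⟪x j₀ s, v⟫ := by
    intro s hs0
    rcases hs0.lt_or_eq with hs | hs
    · have hmono : (M₀ - ⟪x j₀ 0, v⟫) * Real.exp (Λ * 0) - Γ / K1 * (M₀ - m₀) * 0 ≤
          (M₀ - ⟪x j₀ s, v⟫) * Real.exp (Λ * s) - Γ / K1 * (M₀ - m₀) * s := by
        apply mono_aux
          (fun u => (M₀ - ⟪x j₀ u, v⟫) * Real.exp (Λ * u) - Γ / K1 * (M₀ - m₀) * u) 0 s hs.le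
        · exact (((continuous_const.sub ((hsol.contx j₀).inner continuous_const)).mul
            (Real.continuous_exp.comp (continuous_const.mul continuous_id))).sub
            (continuous_const.mul continuous_id)).continuousOn
        · intro u hu
          have hu0 : (0:ℝ) ≤ M₀ - ⟪x j₀ u, v⟫ := by
            linarith [(hInvV u hu.1.le).1 j₀]
          obtain ⟨D', hd', hDle⟩ : ∃ D', HasDerivAt (fun r => ⟪x j₀ r, v⟫) D' u ∧
              Γ / K1 * (M₀ - ⟪x L u, v⟫) - Λ * (M₀ - ⟪x j₀ u, v⟫) ≤ -D' := by
            refine ⟨_, xlead_deriv hsol j₀ hj₀k u hu.1 v, ?_⟩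
            have hLmem : L ∈ Finset.univ.erase j₀ :=
              Finset.mem_erase.mpr ⟨hLj₀, Finset.mem_univ L⟩
            have hγle : Γ / K1 ≤ ψ (x j₀ u) (x L u) / K1 :=
              (div_le_div_iff_of_pos_right hK1).mpr
                (hΓψle _ _ ((hInvN u hu.1.le).1 j₀) ((hInvN u hu.1.le).1 L))
            have hts := two_sum_ge (Finset.univ.erase j₀)
              (Finset.univ.filter (fun j : Fin M => (j : ℕ) < h))
              (fun j => ψ (x j₀ u) (x j u) / K1) (fun j => M₀ - ⟪x j u, v⟫)
              (fun j => φ (x j₀ u) (y j (u - τ)) / K1) (fun j => M₀ - ⟪y j (u - τ), v⟫)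
              (M₀ - ⟪x j₀ u, v⟫) Λ K1 ((N:ℝ) - 1) (h:ℝ) (Γ / K1) L hLmem
              hK1 hΛpos.le hu0 (le_of_eq (card_erase_real j₀)) (card_filter_lt_le M h)
              (by rw [hK1def]; linarith)
              (fun j _ => ⟨div_nonneg (hψΛ _ _).1 hK1.le,
                (div_le_div_iff_of_pos_right hK1).mpr (hψΛ _ _).2⟩)
              (fun j _ => ⟨div_nonneg (hφΛ _ _).1 hK1.le,
                (div_le_div_iff_of_pos_right hK1).mpr (hφΛ _ _).2⟩)
              (fun j _ => by
                show (0:ℝ) ≤ M₀ - ⟪x j u, v⟫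
                linarith [(hInvV u hu.1.le).1 j])
              (fun j hj => by
                show (0:ℝ) ≤ M₀ - ⟪y j (u - τ), v⟫
                linarith [hyAllV j (Finset.mem_filter.mp hj).2 (u - τ) (by linarith [hu.1])])
              hγle
            have hiden : (∑ j ∈ Finset.univ.erase j₀,
                  (ψ (x j₀ u) (x j u) / K1) * ((M₀ - ⟪x j u, v⟫) - (M₀ - ⟪x j₀ u, v⟫))) +
                ∑ j ∈ Finset.univ.filter (fun j : Fin M => (j : ℕ) < h),
                  (φ (x j₀ u) (y j (u - τ)) / K1) *
                    ((M₀ - ⟪y j (u - τ), v⟫) - (M₀ - ⟪x j₀ u, v⟫))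
                = -((∑ j ∈ Finset.univ.erase j₀,
                  (ψ (x j₀ u) (x j u) / K1) * (⟪x j u, v⟫ - ⟪x j₀ u, v⟫)) +
                ∑ j ∈ Finset.univ.filter (fun j : Fin M => (j : ℕ) < h),
                  (φ (x j₀ u) (y j (u - τ)) / K1) * (⟪y j (u - τ), v⟫ - ⟪x j₀ u, v⟫)) := by
              rw [neg_add, ← Finset.sum_neg_distrib, ← Finset.sum_neg_distrib]
              congr 1
              · exact Finset.sum_congr rfl fun j _ => by ring
              · exact Finset.sum_congr rfl fun j _ => by ring
            rw [hiden] at hts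
            exact hts
          have h1 : HasDerivAt (fun r => M₀ - ⟪x j₀ r, v⟫) (0 - D') u :=
            (hasDerivAt_const u M₀).sub hd'
          have h2 : HasDerivAt (fun r => Real.exp (Λ * r)) (Real.exp (Λ * u) * Λ) u :=
            (Real.hasDerivAt_exp _).comp u (by simpa using (hasDerivAt_id u).const_mul Λ)
          have h3 : HasDerivAt (fun r => Γ / K1 * (M₀ - m₀) * r)
              (Γ / K1 * (M₀ - m₀) * 1) u := (hasDerivAt_id u).const_mul _
          refine ⟨_, (h1.mul h2).sub h3, ?_⟩
          have hE : 0 < Real.exp (Λ * u) := Real.exp_pos _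
          have hγ0 : 0 ≤ Γ / K1 := div_nonneg hΓ0 hK1.le
          have hl1 := mul_le_mul_of_nonneg_right hDle hE.le
          have hkey : Real.exp (-(Λ * u)) * Real.exp (Λ * u) = 1 := by
            rw [← Real.exp_add]; simp
          have ha : Γ / K1 * ((M₀ - m₀) * Real.exp (-(Λ * u))) ≤
              Γ / K1 * (M₀ - ⟪x L u, v⟫) :=
            mul_le_mul_of_nonneg_left (hstep2 u hu.1.le) hγ0
          have hb := mul_le_mul_of_nonneg_right ha hE.le
          have hl2 : Γ / K1 * (M₀ - m₀) ≤ Γ / K1 * (M₀ - ⟪x L u, v⟫) * Real.exp (Λ * u) := by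
            calc Γ / K1 * (M₀ - m₀)
                = Γ / K1 * ((M₀ - m₀) * Real.exp (-(Λ * u))) * Real.exp (Λ * u) := by
                  rw [mul_assoc (Γ / K1), mul_assoc (M₀ - m₀), hkey, mul_one]
              _ ≤ _ := hb
          nlinarith [hl1, hl2]
      have hstart : 0 ≤ M₀ - ⟪x j₀ 0, v⟫ := by
        linarith [hM0xl j₀ hj₀k 0 ⟨neg_nonpos.2 hτ.le, le_refl 0⟩]
      simp only [mul_zero, Real.exp_zero, mul_one, sub_zero] at hmono
      have h10 : Γ / K1 * (M₀ - m₀) * s ≤ (M₀ - ⟪x j₀ s, v⟫) * Real.exp (Λ * s) := by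
        linarith
      have h11 := mul_le_mul_of_nonneg_right h10 (Real.exp_pos (-(Λ * s))).le
      have hkey2 : Real.exp (Λ * s) * Real.exp (-(Λ * s)) = 1 := by
        rw [← Real.exp_add]; simp
      calc Γ / K1 * (M₀ - m₀) * s * Real.exp (-(Λ * s))
          ≤ (M₀ - ⟪x j₀ s, v⟫) * Real.exp (Λ * s) * Real.exp (-(Λ * s)) := h11
        _ = M₀ - ⟪x j₀ s, v⟫ := by rw [mul_assoc, hkey2, mul_one]
    · rw [← hs]
      have := hM0xl j₀ hj₀k 0 ⟨neg_nonpos.2 hτ.le, le_refl 0⟩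
      simp only [mul_zero, zero_mul]
      linarith
  -- main part
  intro t ht i hi
  have ht4 : 4 * τ ≤ t := ht.1
  have ht6 : t ≤ 6 * τ := ht.2
  have htτ : τ < t := by linarith
  have hm₀M₀' : (0:ℝ) ≤ M₀ - m₀ := by linarith
  have hγ₂0 : 0 ≤ Γ / K2 := div_nonneg hΓ0 hK2.le
  have hγ₁0 : 0 ≤ Γ / K1 := div_nonneg hΓ0 hK1.le
  set CC : ℝ := Γ / K2 * (Γ / K1 * (M₀ - m₀)) * Real.exp (Λ * τ) with hCCdef
  have hCC0 : 0 ≤ CC := by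
    rw [hCCdef]
    exact mul_nonneg (mul_nonneg hγ₂0 (mul_nonneg hγ₁0 hm₀M₀')) (Real.exp_pos _).le
  have hmono4 : (M₀ - ⟪y i τ, v⟫) * Real.exp (Λ * τ) - CC * ((τ - τ) ^ 2 / 2) ≤
      (M₀ - ⟪y i t, v⟫) * Real.exp (Λ * t) - CC * ((t - τ) ^ 2 / 2) := by
    apply mono_aux (fun u => (M₀ - ⟪y i u, v⟫) * Real.exp (Λ * u) - CC * ((u - τ) ^ 2 / 2))
      τ t htτ.le
    · exact (((continuous_const.sub ((hsol.conty i).inner continuous_const)).mul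
        (Real.continuous_exp.comp (continuous_const.mul continuous_id))).sub
        (continuous_const.mul (((continuous_id.sub continuous_const).pow 2).div_const 2))).continuousOn
    · intro u hu
      have hu0 : 0 < u := lt_trans hτ hu.1
      have huτ : 0 ≤ u - τ := by linarith [hu.1]
      have hvy0 : (0:ℝ) ≤ M₀ - ⟪y i u, v⟫ := by linarith [(hInvV u hu0.le).2 i]
      obtain ⟨D', hd', hDle⟩ : ∃ D', HasDerivAt (fun r => ⟪y i r, v⟫) D' u ∧
          Γ / K2 * (M₀ - ⟪x j₀ (u - τ), v⟫) - Λ * (M₀ - ⟪y i u, v⟫) ≤ -D' := by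
        refine ⟨_, ylead_deriv hsol i hi u hu0 v, ?_⟩
        have hj₀mem : j₀ ∈ Finset.univ.filter (fun j : Fin N => (j : ℕ) < k) :=
          Finset.mem_filter.mpr ⟨Finset.mem_univ _, hj₀k⟩
        have hγle : Γ / K2 ≤ φs (y i u) (x j₀ (u - τ)) / K2 :=
          (div_le_div_iff_of_pos_right hK2).mpr
            (hΓφsle _ _ ((hInvN u hu0.le).2 i) ((hInvN (u - τ) huτ).1 j₀))
        have hts := two_sum_ge
          (Finset.univ.filter (fun j : Fin N => (j : ℕ) < k)) (Finset.univ.erase i)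
          (fun j => φs (y i u) (x j (u - τ)) / K2) (fun j => M₀ - ⟪x j (u - τ), v⟫)
          (fun j => ψs (y i u) (y j u) / K2) (fun j => M₀ - ⟪y j u, v⟫)
          (M₀ - ⟪y i u, v⟫) Λ K2 (k:ℝ) ((M:ℝ) - 1) (Γ / K2) j₀ hj₀mem
          hK2 hΛpos.le hvy0 (card_filter_lt_le N k) (le_of_eq (card_erase_real i))
          (by rw [hK2def]; linarith)
          (fun j _ => ⟨div_nonneg (hφsΛ _ _).1 hK2.le,
            (div_le_div_iff_of_pos_right hK2).mpr (hφsΛ _ _).2⟩)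
          (fun j _ => ⟨div_nonneg (hψsΛ _ _).1 hK2.le,
            (div_le_div_iff_of_pos_right hK2).mpr (hψsΛ _ _).2⟩)
          (fun j hj => by
            show (0:ℝ) ≤ M₀ - ⟪x j (u - τ), v⟫
            linarith [(hInvV (u - τ) huτ).1 j])
          (fun j _ => by
            show (0:ℝ) ≤ M₀ - ⟪y j u, v⟫
            linarith [(hInvV u hu0.le).2 j])
          hγle
        have e1 : ∑ j ∈ Finset.univ.filter (fun j : Fin N => (j : ℕ) < k),
              (φs (y i u) (x j (u - τ)) / K2) * ((M₀ - ⟪x j (u - τ), v⟫) - (M₀ - ⟪y i u, v⟫))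
            = -∑ j ∈ Finset.univ.filter (fun j : Fin N => (j : ℕ) < k),
              (φs (y i u) (x j (u - τ)) / K2) * (⟪x j (u - τ), v⟫ - ⟪y i u, v⟫) := by
          rw [← Finset.sum_neg_distrib]
          exact Finset.sum_congr rfl fun j _ => by ring
        have e2 : ∑ j ∈ Finset.univ.erase i,
              (ψs (y i u) (y j u) / K2) * ((M₀ - ⟪y j u, v⟫) - (M₀ - ⟪y i u, v⟫))
            = -∑ j ∈ Finset.univ.erase i,
              (ψs (y i u) (y j u) / K2) * (⟪y j u, v⟫ - ⟪y i u, v⟫) := by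
          rw [← Finset.sum_neg_distrib]
          exact Finset.sum_congr rfl fun j _ => by ring
        rw [e1, e2] at hts
        linarith [hts]
      have h1 : HasDerivAt (fun r => M₀ - ⟪y i r, v⟫) (0 - D') u :=
        (hasDerivAt_const u M₀).sub hd'
      have h2 : HasDerivAt (fun r => Real.exp (Λ * r)) (Real.exp (Λ * u) * Λ) u :=
        (Real.hasDerivAt_exp _).comp u (by simpa using (hasDerivAt_id u).const_mul Λ)
      have h3 : HasDerivAt (fun r => CC * ((r - τ) ^ 2 / 2))
          (CC * (2 * (u - τ) ^ 1 * 1 / 2)) u :=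
        ((((hasDerivAt_id u).sub_const τ).pow 2).div_const 2).const_mul CC
      refine ⟨_, (h1.mul h2).sub h3, ?_⟩
      have hE : 0 < Real.exp (Λ * u) := Real.exp_pos _
      have hl1 := mul_le_mul_of_nonneg_right hDle hE.le
      have hkey2 : Real.exp (-(Λ * (u - τ))) * Real.exp (Λ * u) = Real.exp (Λ * τ) := by
        rw [← Real.exp_add]
        ring_nf
      have ha : Γ / K2 * (Γ / K1 * (M₀ - m₀) * (u - τ) * Real.exp (-(Λ * (u - τ)))) ≤
          Γ / K2 * (M₀ - ⟪x j₀ (u - τ), v⟫) :=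
        mul_le_mul_of_nonneg_left (hstep3 (u - τ) huτ) hγ₂0
      have hb := mul_le_mul_of_nonneg_right ha hE.le
      have hc2 : Γ / K2 * (Γ / K1 * (M₀ - m₀) * (u - τ) * Real.exp (-(Λ * (u - τ)))) *
          Real.exp (Λ * u) = CC * (u - τ) := by
        rw [hCCdef]
        rw [show Γ / K2 * (Γ / K1 * (M₀ - m₀) * (u - τ) * Real.exp (-(Λ * (u - τ)))) *
            Real.exp (Λ * u) = Γ / K2 * (Γ / K1 * (M₀ - m₀) * (u - τ)) *
            (Real.exp (-(Λ * (u - τ))) * Real.exp (Λ * u)) from by ring, hkey2]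
        ring
      have hl2 : CC * (u - τ) ≤ Γ / K2 * (M₀ - ⟪x j₀ (u - τ), v⟫) * Real.exp (Λ * u) := by
        calc CC * (u - τ) = _ := hc2.symm
          _ ≤ _ := hb
      nlinarith [hl1, hl2]
  -- conclude from hmono4
  have hEτpos : 0 < Real.exp (Λ * τ) := Real.exp_pos _
  have hyiτ : (0:ℝ) ≤ M₀ - ⟪y i τ, v⟫ := by linarith [(hInvV τ hτ.le).2 i]
  have hfin : CC * ((t - τ) ^ 2 / 2) ≤ (M₀ - ⟪y i t, v⟫) * Real.exp (Λ * t) := by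
    linarith [hmono4, mul_nonneg hyiτ hEτpos.le]
  have hEmt := Real.exp_pos (-(Λ * t))
  have hkey3 : Real.exp (Λ * t) * Real.exp (-(Λ * t)) = 1 := by rw [← Real.exp_add]; simp
  have hv : CC * ((t - τ) ^ 2 / 2) * Real.exp (-(Λ * t)) ≤ M₀ - ⟪y i t, v⟫ := by
    have h8 := mul_le_mul_of_nonneg_right hfin hEmt.le
    calc CC * ((t - τ) ^ 2 / 2) * Real.exp (-(Λ * t)) ≤
        (M₀ - ⟪y i t, v⟫) * Real.exp (Λ * t) * Real.exp (-(Λ * t)) := h8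
      _ = M₀ - ⟪y i t, v⟫ := by rw [mul_assoc, hkey3, mul_one]
  -- numeric comparison
  have hM₀pos : 0 < M₀ := lt_of_lt_of_le hm₀pos hm₀M₀
  have hσ0 : 0 ≤ σ := by
    rw [hσ]
    exact le_min hτ.le (div_nonneg (by linarith) (by positivity))
  have hEσpos := Real.exp_pos (-(Λ * σ))
  have hEσ1 : Real.exp (-(Λ * σ)) ≤ 1 :=
    Real.exp_le_one_iff.mpr (neg_nonpos.mpr (mul_nonneg hΛpos.le hσ0))
  have hEτ'pos := Real.exp_pos (-(Λ * τ))
  have hEτ'b : 1 - Real.exp (-(Λ * τ)) ≤ Λ * τ := by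
    have := Real.add_one_le_exp (-(Λ * τ)); linarith
  have hEτ'0 : 0 ≤ 1 - Real.exp (-(Λ * τ)) := by
    have h1 : Real.exp (-(Λ * τ)) ≤ 1 :=
      Real.exp_le_one_iff.mpr (neg_nonpos.mpr (mul_nonneg hΛpos.le hτ.le))
    linarith
  have hE6pos := Real.exp_pos (-(6 * τ * Λ))
  have hMX : M₀ * ((1 / (K1 * K2)) * (Γ / Λ) ^ 2 * δ₁ * Real.exp (-(6 * τ * Λ)) *
      (1 - Real.exp (-(Λ * τ))) ^ 2)
      = (Γ ^ 2 * (M₀ - m₀) * Real.exp (-(6 * τ * Λ)) / (2 * K1 * K2)) *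
        (Γ * (1 - Real.exp (-(Λ * σ))) * (1 - Real.exp (-(Λ * τ))) ^ 2 /
          (Λ ^ 3 * ((N:ℝ) - 1))) := by
    rw [hδ₁]
    field_simp [hΛpos.ne', hK1.ne', hK2.ne', hM₀pos.ne', hN1.ne']
  have hfac1 : 0 ≤ Γ ^ 2 * (M₀ - m₀) * Real.exp (-(6 * τ * Λ)) / (2 * K1 * K2) := by
    apply div_nonneg _ (by positivity)
    exact mul_nonneg (mul_nonneg (sq_nonneg Γ) hm₀M₀') hE6pos.le
  have hcore : Γ * (1 - Real.exp (-(Λ * σ))) * (1 - Real.exp (-(Λ * τ))) ^ 2 /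
      (Λ ^ 3 * ((N:ℝ) - 1)) ≤ 9 * τ ^ 2 := by
    rw [div_le_iff₀ (by positivity)]
    have hb2 : (1 - Real.exp (-(Λ * τ))) ^ 2 ≤ (Λ * τ) ^ 2 := pow_le_pow_left₀ hEτ'0 hEτ'b 2
    have e1 : 0 ≤ 1 - Real.exp (-(Λ * σ)) := by linarith
    have e2 : 1 - Real.exp (-(Λ * σ)) ≤ 1 := by linarith
    have s1 : Γ * (1 - Real.exp (-(Λ * σ))) ≤ Λ := by
      calc Γ * (1 - Real.exp (-(Λ * σ))) ≤ Γ * 1 := mul_le_mul_of_nonneg_left e2 hΓ0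
        _ = Γ := mul_one _
        _ ≤ Λ := hΓΛ
    have s2 : Γ * (1 - Real.exp (-(Λ * σ))) * (1 - Real.exp (-(Λ * τ))) ^ 2 ≤
        Λ * (Λ * τ) ^ 2 := by
      have h0b : 0 ≤ (1 - Real.exp (-(Λ * τ))) ^ 2 := sq_nonneg _
      have := mul_le_mul s1 hb2 h0b hΛpos.le
      linarith
    calc Γ * (1 - Real.exp (-(Λ * σ))) * (1 - Real.exp (-(Λ * τ))) ^ 2
        ≤ Λ * (Λ * τ) ^ 2 := s2
      _ = Λ ^ 3 * τ ^ 2 * 1 := by ring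
      _ ≤ Λ ^ 3 * τ ^ 2 * (9 * ((N:ℝ) - 1)) := by
          apply mul_le_mul_of_nonneg_left (by linarith) (by positivity)
      _ = 9 * τ ^ 2 * (Λ ^ 3 * ((N:ℝ) - 1)) := by ring
  have h9 : 9 * τ ^ 2 ≤ (t - τ) ^ 2 := by
    have h3t : 3 * τ ≤ t - τ := by linarith
    calc 9 * τ ^ 2 = (3 * τ) ^ 2 := by ring
      _ ≤ (t - τ) ^ 2 := pow_le_pow_left₀ (by positivity) h3t 2
  have hEe : Real.exp (-(6 * τ * Λ)) ≤ Real.exp (-(Λ * t)) :=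
    Real.exp_le_exp.mpr (by linarith [mul_le_mul_of_nonneg_left ht6 hΛpos.le])
  have hT0 : (Γ ^ 2 * (M₀ - m₀) * Real.exp (-(6 * τ * Λ)) / (2 * K1 * K2)) * (9 * τ ^ 2) ≤
      CC * ((t - τ) ^ 2 / 2) * Real.exp (-(Λ * t)) := by
    have hfin2 : (Γ ^ 2 * (M₀ - m₀) * Real.exp (-(6 * τ * Λ)) / (2 * K1 * K2)) * (9 * τ ^ 2)
        = (Γ ^ 2 * (M₀ - m₀) / (2 * K1 * K2)) * (9 * τ ^ 2 * Real.exp (-(6 * τ * Λ))) := by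
      ring
    have hfin3 : CC * ((t - τ) ^ 2 / 2) * Real.exp (-(Λ * t))
        = (Γ ^ 2 * (M₀ - m₀) / (2 * K1 * K2)) *
          (Real.exp (Λ * τ) * ((t - τ) ^ 2 * Real.exp (-(Λ * t)))) := by
      rw [hCCdef]
      field_simp [hK1.ne', hK2.ne']
    rw [hfin2, hfin3]
    apply mul_le_mul_of_nonneg_left _
      (div_nonneg (mul_nonneg (sq_nonneg Γ) hm₀M₀') (by positivity))
    calc 9 * τ ^ 2 * Real.exp (-(6 * τ * Λ)) ≤ (t - τ) ^ 2 * Real.exp (-(Λ * t)) :=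
          mul_le_mul h9 hEe hE6pos.le (sq_nonneg _)
      _ ≤ Real.exp (Λ * τ) * ((t - τ) ^ 2 * Real.exp (-(Λ * t))) :=
          le_mul_of_one_le_left (mul_nonneg (sq_nonneg _) hEmt.le)
            (Real.one_le_exp (by positivity))
  have hXle : M₀ * ((1 / (K1 * K2)) * (Γ / Λ) ^ 2 * δ₁ * Real.exp (-(6 * τ * Λ)) *
      (1 - Real.exp (-(Λ * τ))) ^ 2) ≤ M₀ - ⟪y i t, v⟫ := by
    rw [hMX]
    calc _ ≤ (Γ ^ 2 * (M₀ - m₀) * Real.exp (-(6 * τ * Λ)) / (2 * K1 * K2)) * (9 * τ ^ 2) :=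
          mul_le_mul_of_nonneg_left hcore hfac1
      _ ≤ CC * ((t - τ) ^ 2 / 2) * Real.exp (-(Λ * t)) := hT0
      _ ≤ M₀ - ⟪y i t, v⟫ := hv
  linarith [hXle]
end
end
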